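/- arXiv:math/0308091 — 10 statements merged into one kernel-verified Lean document; each statement's English description precedes it below -/
import Mathlib

section
/- For every function ψ : ℕ → ℤ and every natural number n, the number of pairs (x,y) ∈ [0,2^n)² such that ψ(x ⊕ y) = x + y is at most 3^n, where ⊕ denotes bitwise XOR (dyadic addition). -/
/-!
Record, for each of the `n` bit positions, whether the bits of `x` and `y` agree, and if not which
of them is set: there are `3 ^ n` such patterns. The pattern determines `x ^^^ y`, hence `x + y`
through `ψ`; then `x + y = (x ^^^ y) + 2 * (x &&& y)` recovers `x &&& y`, which supplies the bits
the pattern leaves open. So the pattern is injective on the solution set.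
-/

namespace Nat

theorem add_eq_xor_add_two_mul_and (x y : ℕ) : x + y = (x ^^^ y) + 2 * (x &&& y) := by
  induction x using Nat.strong_induction_on generalizing y with
  | _ x ih =>
    rcases Nat.eq_zero_or_pos x with rfl | hx
    · simp
    · have := ih (x / 2) (Nat.div_lt_self hx one_lt_two) (y / 2)
      have := Nat.xor_div_two (a := x) (b := y)
      have := Nat.and_div_two (a := x) (b := y)
      have := Nat.and_mod_two_eq_one (a := x) (b := y)
      have := Nat.xor_mod_two_eq_one (a := x) (b := y)
      omega

def bitPattern (x y i : ℕ) : Fin 3 :=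
  if x.testBit i = y.testBit i then 0 else if x.testBit i then 1 else 2

theorem bitPattern_eq_zero_iff {x y i : ℕ} :
    bitPattern x y i = 0 ↔ (x ^^^ y).testBit i = false := by
  unfold bitPattern
  rw [testBit_xor]
  generalize x.testBit i = a, y.testBit i = b
  cases a <;> cases b <;> decide

theorem bitPattern_of_lt_two_pow {x y n i : ℕ} (hx : x < 2 ^ n) (hy : y < 2 ^ n) (hi : n ≤ i) :
    bitPattern x y i = 0 := by
  have hx' := testBit_lt_two_pow (lt_of_lt_of_le hx (Nat.pow_le_pow_right two_pos hi))
  have hy' := testBit_lt_two_pow (lt_of_lt_of_le hy (Nat.pow_le_pow_right two_pos hi))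
  simp [bitPattern, hx', hy']

theorem xor_eq_of_bitPattern_eq {x y x' y' : ℕ} (h : ∀ i, bitPattern x y i = bitPattern x' y' i) :
    x ^^^ y = x' ^^^ y' :=
  eq_of_testBit_eq fun i => by
    have := congrArg (· = (0 : Fin 3)) (h i)
    simp only [bitPattern_eq_zero_iff, eq_iff_iff, Bool.coe_false_iff_false] at this
    simpa using this

theorem testBit_eq_of_bitPattern_eq_of_testBit_and_eq {x y x' y' i : ℕ}
    (hp : bitPattern x y i = bitPattern x' y' i)
    (ha : (x &&& y).testBit i = (x' &&& y').testBit i) :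
    x.testBit i = x'.testBit i ∧ y.testBit i = y'.testBit i := by
  unfold bitPattern at hp
  rw [testBit_and, testBit_and] at ha
  generalize x.testBit i = a, y.testBit i = b, x'.testBit i = a', y'.testBit i = b' at hp ha ⊢
  cases a <;> cases b <;> cases a' <;> cases b' <;> simp_all

theorem eq_of_bitPattern_eq_of_add_eq {x y x' y' : ℕ}
    (hp : ∀ i, bitPattern x y i = bitPattern x' y' i) (hs : x + y = x' + y') :
    x = x' ∧ y = y' := by
  have hxor := xor_eq_of_bitPattern_eq hp
  have hand : x &&& y = x' &&& y' := by
    have := add_eq_xor_add_two_mul_and x y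
    have := add_eq_xor_add_two_mul_and x' y'
    omega
  have hbits i := testBit_eq_of_bitPattern_eq_of_testBit_and_eq (hp i) (by rw [hand])
  exact ⟨eq_of_testBit_eq fun i => (hbits i).1, eq_of_testBit_eq fun i => (hbits i).2⟩

theorem card_le_three_pow_of_add_determined_by_xor {n : ℕ} {S : Finset (ℕ × ℕ)}
    (hS : S ⊆ Finset.range (2 ^ n) ×ˢ Finset.range (2 ^ n))
    (hsum : ∀ p ∈ S, ∀ q ∈ S, p.1 ^^^ p.2 = q.1 ^^^ q.2 → p.1 + p.2 = q.1 + q.2) :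
    S.card ≤ 3 ^ n := by
  have hcard : (Finset.univ : Finset (Fin n → Fin 3)).card = 3 ^ n := by simp
  rw [← hcard]
  refine Finset.card_le_card_of_injOn (fun p i => bitPattern p.1 p.2 i)
    (fun _ _ => Finset.mem_univ _) ?_
  rintro ⟨x, y⟩ hp ⟨x', y'⟩ hq hpq
  have hbound {a b} (h : (a, b) ∈ S) : a < 2 ^ n ∧ b < 2 ^ n := by
    simpa using hS h
  obtain ⟨hx, hy⟩ := hbound hp
  obtain ⟨hx', hy'⟩ := hbound hq
  have hpat i : bitPattern x y i = bitPattern x' y' i := by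
    rcases lt_or_ge i n with hi | hi
    · exact congrFun hpq ⟨i, hi⟩
    · rw [bitPattern_of_lt_two_pow hx hy hi, bitPattern_of_lt_two_pow hx' hy' hi]
  obtain ⟨rfl, rfl⟩ :=
    eq_of_bitPattern_eq_of_add_eq hpat (hsum _ hp _ hq (xor_eq_of_bitPattern_eq hpat))
  rfl

end Nat

theorem stmt_0 (ψ : ℕ → ℤ) (n : ℕ) :
    ((Finset.range (2 ^ n) ×ˢ Finset.range (2 ^ n)).filter
      (fun p : ℕ × ℕ => ψ (p.1 ^^^ p.2) = (p.1 : ℤ) + p.2)).card ≤ 3 ^ n := by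
  refine Nat.card_le_three_pow_of_add_determined_by_xor (Finset.filter_subset _ _) ?_
  intro p hp q hq hxor
  rw [Finset.mem_filter] at hp hq
  exact_mod_cast hp.2.symm.trans (hxor ▸ hq.2)
end

section
/- For every natural number n, the number of triples (x,y,z) ∈ [0,2^n)³ such that x + y - z ∈ [0,2^n) and x ⊕ y ⊕ z = x + y - z is at most 6^n, where ⊕ denotes bitwise XOR. -/
/-!
Put `w = x + y - z`. Since `a + b = (a ⊕ b) + 2 (a ∧ b)`, the equations `x + y = z + w` and
`x ⊕ y = z ⊕ w` force `x ∧ y = z ∧ w`. Reading this bit by bit, with `w_i = x_i ⊕ y_i ⊕ z_i`,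
the bit triple `(x_i, y_i, z_i)` can be neither `(1,1,0)` nor `(0,0,1)`, which leaves six choices
at each of the `n` positions.
-/

namespace Nat

theorem add_eq_xor_add_two_mul_land (a : ℕ) : ∀ b : ℕ, a + b = (a ^^^ b) + 2 * (a &&& b) := by
  induction a using Nat.binaryRec with
  | zero => simp
  | bit x a ih =>
    intro b
    induction b using Nat.bitCasesOn with
    | bit y b =>
      rw [xor_bit, land_bit, bit_val, bit_val, bit_val, bit_val]
      have := ih b
      cases x <;> cases y <;> simp [Bool.toNat] at * <;> omega

theorem land_eq_of_add_eq_of_xor_eq {x y z w : ℕ} (hadd : x + y = z + w)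
    (hxor : x ^^^ y = z ^^^ w) : x &&& y = z &&& w := by
  have := add_eq_xor_add_two_mul_land x y
  have := add_eq_xor_add_two_mul_land z w
  omega

theorem eq_of_testBit_eq_of_lt_two_pow {x y n : ℕ} (hx : x < 2 ^ n) (hy : y < 2 ^ n)
    (h : ∀ i < n, x.testBit i = y.testBit i) : x = y := by
  refine eq_of_testBit_eq fun i => ?_
  rcases lt_or_ge i n with hi | hi
  · exact h i hi
  · have := Nat.pow_le_pow_right two_pos hi
    rw [testBit_lt_two_pow (by omega), testBit_lt_two_pow (by omega)]

end Nat

def bitTriple (p : ℕ × ℕ × ℕ) (i : ℕ) : Bool × Bool × Bool :=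
  (p.1.testBit i, p.2.1.testBit i, p.2.2.testBit i)

theorem card_le_pow_of_bitTriple_mem {n : ℕ} {s : Finset (ℕ × ℕ × ℕ)}
    (hs : s ⊆ Finset.range (2 ^ n) ×ˢ Finset.range (2 ^ n) ×ˢ Finset.range (2 ^ n))
    (S : Finset (Bool × Bool × Bool)) (hS : ∀ p ∈ s, ∀ i < n, bitTriple p i ∈ S) :
    s.card ≤ S.card ^ n := by
  calc s.card ≤ ((Finset.range n).pi fun _ => S).card := by
        refine Finset.card_le_card_of_injOn (fun p i _ => bitTriple p i)
          (fun p hp => Finset.mem_pi.2 fun i hi => hS p hp i (Finset.mem_range.1 hi)) ?_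
        rintro ⟨x, y, z⟩ hp ⟨x', y', z'⟩ hp' heq
        obtain ⟨hx, hy, hz⟩ : x < 2 ^ n ∧ y < 2 ^ n ∧ z < 2 ^ n := by simpa using hs hp
        obtain ⟨hx', hy', hz'⟩ : x' < 2 ^ n ∧ y' < 2 ^ n ∧ z' < 2 ^ n := by simpa using hs hp'
        have hbits (i) (hi : i < n) : bitTriple (x, y, z) i = bitTriple (x', y', z') i :=
          congrFun (congrFun heq i) (Finset.mem_range.2 hi)
        simp only [bitTriple, Prod.mk.injEq] at hbits
        rw [Nat.eq_of_testBit_eq_of_lt_two_pow hx hx' fun i hi => (hbits i hi).1,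
          Nat.eq_of_testBit_eq_of_lt_two_pow hy hy' fun i hi => (hbits i hi).2.1,
          Nat.eq_of_testBit_eq_of_lt_two_pow hz hz' fun i hi => (hbits i hi).2.2]
    _ = S.card ^ n := by rw [Finset.card_pi, Finset.prod_const, Finset.card_range]

/-- All bit triples except `(1,1,0)` and `(0,0,1)`. -/
def admissibleBitTriples : Finset (Bool × Bool × Bool) :=
  Finset.univ.filter fun t => (t.1 && t.2.1) = (t.2.2 && (t.1 ^^ (t.2.1 ^^ t.2.2)))

theorem card_admissibleBitTriples : admissibleBitTriples.card = 6 := by decide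

theorem bitTriple_mem_admissibleBitTriples {x y z : ℕ} (hz : z ≤ x + y)
    (hxor : x ^^^ y ^^^ z = x + y - z) (i : ℕ) : bitTriple (x, y, z) i ∈ admissibleBitTriples := by
  have hand : x &&& y = z &&& (x + y - z) := by
    refine Nat.land_eq_of_add_eq_of_xor_eq (by omega) ?_
    rw [← hxor, Nat.xor_comm z, Nat.xor_xor_cancel_right]
  have hbit := congrArg (Nat.testBit · i) hand
  rw [← hxor] at hbit
  simpa [admissibleBitTriples, bitTriple, Nat.testBit_land, Nat.testBit_xor] using hbit

theorem stmt_1 (n : ℕ) :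
    ((Finset.range (2 ^ n) ×ˢ Finset.range (2 ^ n) ×ˢ Finset.range (2 ^ n)).filter
      (fun p : ℕ × ℕ × ℕ => p.2.2 ≤ p.1 + p.2.1 ∧ p.1 + p.2.1 - p.2.2 < 2 ^ n ∧
        p.1 ^^^ p.2.1 ^^^ p.2.2 = p.1 + p.2.1 - p.2.2)).card ≤ 6 ^ n := by
  rw [← card_admissibleBitTriples]
  refine card_le_pow_of_bitTriple_mem (Finset.filter_subset _ _) _ ?_
  rintro ⟨x, y, z⟩ hp i -
  obtain ⟨-, hz, -, hxor⟩ := Finset.mem_filter.1 hp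
  exact bitTriple_mem_admissibleBitTriples hz hxor i
end

section
/- For every natural number n and every fixed z ∈ [0,2^n), the number of pairs (x,y) ∈ [0,2^n)² such that x + y - z ∈ [0,2^n) and x ⊕ y ⊕ z = x + y - z is at most 3^n. -/
lemma add_eq_xor_add_two_mul_and : ∀ x y : ℕ, x + y = (x ^^^ y) + 2 * (x &&& y) := by
  intro x
  induction x using Nat.strong_induction_on with
  | _ x ih =>
    intro y
    rcases Nat.eq_zero_or_pos x with hx | hx
    · simp [hx]
    · have hlt : x / 2 < x := Nat.div_lt_self hx one_lt_two
      have IH := ih (x / 2) hlt (y / 2)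
      have h3 : (x ^^^ y) / 2 = x / 2 ^^^ y / 2 := Nat.xor_div_two
      have h4 : (x &&& y) / 2 = x / 2 &&& y / 2 := Nat.and_div_two
      have p1 := Nat.and_mod_two_eq_one (a := x) (b := y)
      have p2 := Nat.xor_mod_two_eq_one (a := x) (b := y)
      omega

lemma bit0_cond {x y z : ℕ} (h : x &&& y = z &&& (x ^^^ y ^^^ z)) :
    x % 2 &&& y % 2 = z % 2 &&& (x % 2 ^^^ y % 2 ^^^ z % 2) := by
  have hm : (x &&& y) % 2 = (z &&& (x ^^^ y ^^^ z)) % 2 := by rw [h]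
  have p1 := Nat.and_mod_two_eq_one (a := x) (b := y)
  have p2 := Nat.xor_mod_two_eq_one (a := x) (b := y)
  have p3 := Nat.xor_mod_two_eq_one (a := x ^^^ y) (b := z)
  have p4 := Nat.and_mod_two_eq_one (a := z) (b := x ^^^ y ^^^ z)
  rcases Nat.mod_two_eq_zero_or_one x with hx | hx <;>
  rcases Nat.mod_two_eq_zero_or_one y with hy | hy <;>
  rcases Nat.mod_two_eq_zero_or_one z with hz | hz <;>
  rw [hx, hy, hz] <;> first | decide | omega

lemma div_cond {x y z : ℕ} (h : x &&& y = z &&& (x ^^^ y ^^^ z)) :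
    x / 2 &&& y / 2 = z / 2 &&& (x / 2 ^^^ y / 2 ^^^ z / 2) := by
  rw [← Nat.and_div_two, ← Nat.xor_div_two, ← Nat.xor_div_two, ← Nat.and_div_two, h]

lemma count_cond (n : ℕ) : ∀ z : ℕ,
    ((Finset.range (2 ^ n) ×ˢ Finset.range (2 ^ n)).filter
      (fun p : ℕ × ℕ => p.1 &&& p.2 = z &&& (p.1 ^^^ p.2 ^^^ z))).card ≤ 3 ^ n := by
  induction n with
  | zero =>
    intro z
    calc _ ≤ ((Finset.range 1 ×ˢ Finset.range 1)).card := Finset.card_filter_le _ _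
    _ = 1 := by decide
    _ ≤ 3 ^ 0 := by norm_num
  | succ n ih =>
    intro z
    set T : Finset (ℕ × ℕ) := (Finset.range 2 ×ˢ Finset.range 2).filter
      (fun q : ℕ × ℕ => q.1 &&& q.2 = z % 2 &&& (q.1 ^^^ q.2 ^^^ z % 2)) with hT
    set S : Finset (ℕ × ℕ) := (Finset.range (2 ^ n) ×ˢ Finset.range (2 ^ n)).filter
      (fun p : ℕ × ℕ => p.1 &&& p.2 = z / 2 &&& (p.1 ^^^ p.2 ^^^ z / 2)) with hS
    have hpow : 2 ^ (n + 1) = 2 * 2 ^ n := by ring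
    have hmaps : ∀ p ∈ (Finset.range (2 ^ (n+1)) ×ˢ Finset.range (2 ^ (n+1))).filter
        (fun p : ℕ × ℕ => p.1 &&& p.2 = z &&& (p.1 ^^^ p.2 ^^^ z)),
        ((p.1 % 2, p.2 % 2), (p.1 / 2, p.2 / 2)) ∈ T ×ˢ S := by
      intro p hp
      simp only [Finset.mem_filter, Finset.mem_product, Finset.mem_range] at hp
      obtain ⟨⟨h1, h2⟩, h3⟩ := hp
      refine Finset.mem_product.mpr ⟨Finset.mem_filter.mpr ⟨Finset.mem_product.mpr
        ⟨Finset.mem_range.mpr (show p.1 % 2 < 2 by omega), Finset.mem_range.mpr (show p.2 % 2 < 2 by omega)⟩, bit0_cond h3⟩,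
        Finset.mem_filter.mpr ⟨Finset.mem_product.mpr
        ⟨Finset.mem_range.mpr (show p.1 / 2 < 2 ^ n by omega), Finset.mem_range.mpr (show p.2 / 2 < 2 ^ n by omega)⟩, div_cond h3⟩⟩
    have hinj : Set.InjOn (fun p : ℕ × ℕ => ((p.1 % 2, p.2 % 2), (p.1 / 2, p.2 / 2)))
        ((Finset.range (2 ^ (n+1)) ×ˢ Finset.range (2 ^ (n+1))).filter
        (fun p : ℕ × ℕ => p.1 &&& p.2 = z &&& (p.1 ^^^ p.2 ^^^ z)) : Finset (ℕ × ℕ)) := by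
      intro p _ q _ h
      simp only [Prod.mk.injEq] at h
      obtain ⟨⟨h1, h2⟩, h3, h4⟩ := h
      ext <;> omega
    calc _ ≤ (T ×ˢ S).card := Finset.card_le_card_of_injOn _ hmaps hinj
    _ = T.card * S.card := Finset.card_product T S
    _ ≤ 3 * 3 ^ n := by
        apply Nat.mul_le_mul _ (ih (z / 2))
        rcases Nat.mod_two_eq_zero_or_one z with hz | hz <;> rw [hT, hz] <;> decide
    _ = 3 ^ (n + 1) := by ring

theorem stmt_2 (n z : ℕ) (hz : z < 2 ^ n) :
    ((Finset.range (2 ^ n) ×ˢ Finset.range (2 ^ n)).filter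
      (fun p : ℕ × ℕ => z ≤ p.1 + p.2 ∧ p.1 + p.2 - z < 2 ^ n ∧
        p.1 ^^^ p.2 ^^^ z = p.1 + p.2 - z)).card ≤ 3 ^ n := by
  refine le_trans (Finset.card_le_card ?_) (count_cond n z)
  intro p hp
  simp only [Finset.mem_filter, Finset.mem_product, Finset.mem_range] at hp ⊢
  obtain ⟨hmem, h1, h2, h3⟩ := hp
  refine ⟨hmem, ?_⟩
  set w := p.1 + p.2 - z with hw
  have hsum : p.1 + p.2 = z + w := by omega
  have hxor : p.1 ^^^ p.2 = z ^^^ w := by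
    have := congrArg (· ^^^ z) h3
    simp only [xor_cancel_right] at this
    rw [this, Nat.xor_comm]
  have k1 := add_eq_xor_add_two_mul_and p.1 p.2
  have k2 := add_eq_xor_add_two_mul_and z w
  rw [h3]
  omega
end

section
/- If σ : ℕ → ℕ is a dyadically linear permutation, then for every natural number n, the cardinality of A_n^σ = { (k,l,m) ∈ [0,2^n)³ : k+l-m ∈ [0,2^n) and σ(k) ⊕ σ(l) ⊕ σ(m) = σ(k+l-m) } is at most 6^n. -/
/-- `A n τ`: triples `(k,l,m) ∈ [0,2^n)³` with `k+l-m ∈ [0,2^n)` and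
`τ(k) ⊕ τ(l) ⊕ τ(m) = τ(k+l-m)`. -/
def A (n : ℕ) (τ : ℕ → ℕ) : Finset (ℕ × ℕ × ℕ) :=
  (Finset.range (2 ^ n) ×ˢ Finset.range (2 ^ n) ×ˢ Finset.range (2 ^ n)).filter
    (fun p => p.2.2 ≤ p.1 + p.2.1 ∧ p.1 + p.2.1 - p.2.2 < 2 ^ n ∧
      τ p.1 ^^^ τ p.2.1 ^^^ τ p.2.2 = τ (p.1 + p.2.1 - p.2.2))

/-!
An injective XOR-linear `σ` can be cancelled from the defining equation of `A n σ`, so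
`A n σ = A n id`: it consists of the triples with `k + l = m + j` and `k ⊕ l ⊕ m = j`, where
`j = k + l - m`. Since `a + b = (a ⊕ b) + 2 (a ∧ b)`, these two equations say that `{k, l}` and
`{m, j}` have the same XOR and the same AND. Both are bitwise, so they pass to `(k/2, l/2, m/2)`,
and they rule out the lowest bits `(k, l, m) ≡ (0, 0, 1)` and `(1, 1, 0)`. Thus each triple of
`A (n+1) id` is determined by a triple of `A n id` and one of six lowest bits.
-/

theorem Nat.add_eq_xor_add_two_mul_and_s5 (a b : ℕ) : a + b = (a ^^^ b) + 2 * (a &&& b) := by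
  induction a using Nat.strong_induction_on generalizing b with
  | _ a ih =>
    rcases Nat.eq_zero_or_pos a with rfl | ha
    · simp
    have := ih (a / 2) (Nat.div_lt_self ha one_lt_two) (b / 2)
    have := @Nat.xor_div_two a b
    have := @Nat.and_div_two a b
    have := @Nat.xor_mod_two_eq a b
    have := @Nat.and_mod_two_eq_one a b
    omega

theorem A_eq_A_id_of_injective {σ : ℕ → ℕ} (hσ : Function.Injective σ)
    (hlin : ∀ m n : ℕ, σ (m ^^^ n) = σ m ^^^ σ n) (n : ℕ) : A n σ = A n id := by
  refine Finset.filter_congr fun p _ => and_congr_right fun _ => and_congr_right fun _ => ?_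
  rw [← hlin, ← hlin, id, id, id]
  exact hσ.eq_iff

section Halving

variable {n k l m j : ℕ}

theorem xor_eq_xor_and_and_eq_and (hsum : k + l = m + j) (hxor : k ^^^ l ^^^ m = j) :
    k ^^^ l = m ^^^ j ∧ k &&& l = m &&& j := by
  have hx : k ^^^ l = m ^^^ j := by
    rw [← hxor, Nat.xor_comm m, Nat.xor_assoc, Nat.xor_assoc, Nat.xor_self, Nat.xor_zero]
  refine ⟨hx, ?_⟩
  have := Nat.add_eq_xor_add_two_mul_and_s5 k l
  have := Nat.add_eq_xor_add_two_mul_and_s5 m j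
  omega

theorem div_two_add_div_two_eq (hsum : k + l = m + j) (hxor : k ^^^ l ^^^ m = j) :
    k / 2 + l / 2 = m / 2 + j / 2 := by
  obtain ⟨hx, ha⟩ := xor_eq_xor_and_and_eq_and hsum hxor
  have := @Nat.xor_mod_two_eq k l
  have := @Nat.xor_mod_two_eq m j
  have := @Nat.and_mod_two_eq_one k l
  have := @Nat.and_mod_two_eq_one m j
  omega

theorem mod_two_eq_of_mod_two_eq (hsum : k + l = m + j) (hxor : k ^^^ l ^^^ m = j)
    (hkl : k % 2 = l % 2) : m % 2 = k % 2 := by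
  obtain ⟨hx, ha⟩ := xor_eq_xor_and_and_eq_and hsum hxor
  have := @Nat.xor_mod_two_eq k l
  have := @Nat.xor_mod_two_eq m j
  have := @Nat.and_mod_two_eq_one k l
  have := @Nat.and_mod_two_eq_one m j
  omega

def admissibleLowBits : Finset (ℕ × ℕ × ℕ) :=
  (Finset.range 2 ×ˢ Finset.range 2 ×ˢ Finset.range 2).filter fun b => b.1 = b.2.1 → b.2.2 = b.1

theorem card_admissibleLowBits : admissibleLowBits.card = 6 := by
  decide

theorem mem_A_id_iff :
    (k, l, m) ∈ A n id ↔ k < 2 ^ n ∧ l < 2 ^ n ∧ m < 2 ^ n ∧ m ≤ k + l ∧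
      k + l - m < 2 ^ n ∧ k ^^^ l ^^^ m = k + l - m := by
  simp only [A, Finset.mem_filter, Finset.mem_product, Finset.mem_range, id, and_assoc]

theorem div_two_mem_A_id (h : (k, l, m) ∈ A (n + 1) id) : (k / 2, l / 2, m / 2) ∈ A n id := by
  rw [mem_A_id_iff] at h ⊢
  obtain ⟨hk, hl, hm, hle, hj, hxor⟩ := h
  have hsum := div_two_add_div_two_eq (by omega : k + l = m + (k + l - m)) hxor
  rw [pow_succ] at hk hl hm hj
  refine ⟨by omega, by omega, by omega, by omega, by omega, ?_⟩
  rw [← Nat.xor_div_two, ← Nat.xor_div_two, hxor]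
  omega

theorem mod_two_mem_admissibleLowBits (h : (k, l, m) ∈ A n id) :
    (k % 2, l % 2, m % 2) ∈ admissibleLowBits := by
  rw [mem_A_id_iff] at h
  obtain ⟨-, -, -, hle, -, hxor⟩ := h
  have := mod_two_eq_of_mod_two_eq (by omega : k + l = m + (k + l - m)) hxor
  simp only [admissibleLowBits, Finset.mem_filter, Finset.mem_product, Finset.mem_range]
  omega

end Halving

theorem card_A_id_succ_le (n : ℕ) : (A (n + 1) id).card ≤ (A n id).card * 6 := by
  rw [← card_admissibleLowBits, ← Finset.card_product]
  refine Finset.card_le_card_of_injOn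
    (fun p => ((p.1 / 2, p.2.1 / 2, p.2.2 / 2), (p.1 % 2, p.2.1 % 2, p.2.2 % 2))) ?_ ?_
  · rintro ⟨k, l, m⟩ h
    exact Finset.mem_product.2 ⟨div_two_mem_A_id h, mod_two_mem_admissibleLowBits h⟩
  · rintro ⟨k, l, m⟩ - ⟨k', l', m'⟩ - h
    simp only [Prod.mk.injEq] at h ⊢
    omega

theorem card_A_id_le (n : ℕ) : (A n id).card ≤ 6 ^ n := by
  induction n with
  | zero => exact (Finset.card_filter_le _ _).trans (by simp)
  | succ n ih => exact (card_A_id_succ_le n).trans (by rw [pow_succ]; gcongr)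

theorem stmt_5 (σ : ℕ → ℕ) (hσ : Function.Bijective σ)
    (hlin : ∀ m n : ℕ, σ (m ^^^ n) = σ m ^^^ σ n) (n : ℕ) :
    (A n σ).card ≤ 6 ^ n := by
  rw [A_eq_A_id_of_injective hσ.injective hlin]
  exact card_A_id_le n
end

section
/- If σ : ℕ → ℕ is a dyadically linear permutation and v ∈ ℕ, then for every n the cardinality of A_n^σ(v) = { (x,y,z) ∈ [0,2^n)³ : x+y-z ∈ [0,2^n) and σ(x) ⊕ σ(y) ⊕ σ(z) ⊕ σ(v) = σ(x+y-z) } is at most 6^n. -/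
/-- `Av n τ v`: triples `(x,y,z) ∈ [0,2^n)³` with `x+y-z ∈ [0,2^n)` and
`τ(x) ⊕ τ(y) ⊕ τ(z) ⊕ τ(v) = τ(x+y-z)`. -/
def Av (n : ℕ) (τ : ℕ → ℕ) (v : ℕ) : Finset (ℕ × ℕ × ℕ) :=
  (Finset.range (2 ^ n) ×ˢ Finset.range (2 ^ n) ×ˢ Finset.range (2 ^ n)).filter
    (fun p => p.2.2 ≤ p.1 + p.2.1 ∧ p.1 + p.2.1 - p.2.2 < 2 ^ n ∧
      τ p.1 ^^^ τ p.2.1 ^^^ τ p.2.2 ^^^ τ v = τ (p.1 + p.2.1 - p.2.2))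

namespace Stmt6Aux

lemma xor_div_two (a b : ℕ) : (a ^^^ b) / 2 = a / 2 ^^^ b / 2 := by
  apply Nat.eq_of_testBit_eq
  intro i
  simp [Nat.testBit_div_two]

lemma xor_mod_two (a b : ℕ) : (a ^^^ b) % 2 = a % 2 ^^^ b % 2 := by
  rw [Nat.xor_mod_two_eq]
  rcases Nat.mod_two_eq_zero_or_one a with h | h <;>
    rcases Nat.mod_two_eq_zero_or_one b with h' | h' <;> simp [h, h'] <;> omega

lemma xor4_swap (x y z w : ℕ) : z ^^^ w ^^^ x ^^^ y = x ^^^ y ^^^ z ^^^ w := by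
  apply Nat.eq_of_testBit_eq
  intro i
  simp only [Nat.testBit_xor]
  cases x.testBit i <;> cases y.testBit i <;> cases z.testBit i <;> cases w.testBit i <;> rfl

/-- quadruples `(x,y,z,w) ∈ [0,2^n)^4` with `x+y = z+w+t` and `x⊕y⊕z⊕w = v`. -/
def Q (n : ℕ) (t : ℤ) (v : ℕ) : Finset (ℕ × ℕ × ℕ × ℕ) :=
  (Finset.range (2 ^ n) ×ˢ Finset.range (2 ^ n) ×ˢ Finset.range (2 ^ n) ×ˢ
      Finset.range (2 ^ n)).filter
    (fun p => (p.1 : ℤ) + p.2.1 = p.2.2.1 + p.2.2.2 + t ∧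
      p.1 ^^^ p.2.1 ^^^ p.2.2.1 ^^^ p.2.2.2 = v)

lemma Q_neg_one (n : ℕ) (v : ℕ) : (Q n (-1) v).card = (Q n 1 v).card := by
  apply Finset.card_bij (fun p _ => (p.2.2.1, p.2.2.2, p.1, p.2.1))
  · rintro ⟨x, y, z, w⟩ hp
    simp only [Q, Finset.mem_filter, Finset.mem_product] at hp ⊢
    refine ⟨⟨hp.1.2.2.1, hp.1.2.2.2, hp.1.1, hp.1.2.1⟩, by omega, ?_⟩
    rw [← hp.2.2]
    exact xor4_swap x y z w
  · rintro ⟨x, y, z, w⟩ _ ⟨x', y', z', w'⟩ _ h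
    simp_all
  · rintro ⟨x, y, z, w⟩ hp
    refine ⟨(z, w, x, y), ?_, rfl⟩
    simp only [Q, Finset.mem_filter, Finset.mem_product] at hp ⊢
    refine ⟨⟨hp.1.2.2.1, hp.1.2.2.2, hp.1.1, hp.1.2.1⟩, by omega, ?_⟩
    rw [← hp.2.2]
    exact xor4_swap x y z w

/-- low-bit patterns compatible with target `t` and low bit `e` of `v`. -/
def pat (t : ℤ) (e : ℕ) : Finset (ℕ × ℕ × ℕ × ℕ) :=
  ((Finset.range 2) ×ˢ (Finset.range 2) ×ˢ (Finset.range 2) ×ˢ (Finset.range 2)).filter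
    (fun b => b.1 ^^^ b.2.1 ^^^ b.2.2.1 ^^^ b.2.2.2 = e ∧
      (t - ((b.1 : ℤ) + b.2.1 - b.2.2.1 - b.2.2.2)) % 2 = 0)

def td (t : ℤ) (b : ℕ × ℕ × ℕ × ℕ) : ℤ :=
  (t - ((b.1 : ℤ) + b.2.1 - b.2.2.1 - b.2.2.2)) / 2

lemma Q_succ_subset (n : ℕ) (t : ℤ) (v : ℕ) :
    Q (n + 1) t v ⊆ (pat t (v % 2)).biUnion (fun b =>
      (Q n (td t b) (v / 2)).image (fun q =>
        (2 * q.1 + b.1, 2 * q.2.1 + b.2.1, 2 * q.2.2.1 + b.2.2.1, 2 * q.2.2.2 + b.2.2.2))) := by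
  rintro ⟨x, y, z, w⟩ hp
  simp only [Q, Finset.mem_filter, Finset.mem_product, Finset.mem_range] at hp
  obtain ⟨⟨hx, hy, hz, hw⟩, heq, hxor⟩ := hp
  have h2 : (2 : ℕ) ^ (n + 1) = 2 * 2 ^ n := by ring
  rw [Finset.mem_biUnion]
  refine ⟨(x % 2, y % 2, z % 2, w % 2), ?_, ?_⟩
  · simp only [pat, Finset.mem_filter, Finset.mem_product, Finset.mem_range]
    refine ⟨⟨by omega, by omega, by omega, by omega⟩, ?_, ?_⟩
    · have : (x ^^^ y ^^^ z ^^^ w) % 2 = v % 2 := by rw [hxor]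
      rwa [xor_mod_two, xor_mod_two, xor_mod_two] at this
    · omega
  · rw [Finset.mem_image]
    refine ⟨(x / 2, y / 2, z / 2, w / 2), ?_, by simp; omega⟩
    simp only [Q, Finset.mem_filter, Finset.mem_product, Finset.mem_range]
    refine ⟨⟨by omega, by omega, by omega, by omega⟩, ?_, ?_⟩
    · simp only [td]
      omega
    · have : (x ^^^ y ^^^ z ^^^ w) / 2 = v / 2 := by rw [hxor]
      rwa [xor_div_two, xor_div_two, xor_div_two] at this

lemma Q_succ_card (n : ℕ) (t : ℤ) (v : ℕ) :
    (Q (n + 1) t v).card ≤ ∑ b ∈ pat t (v % 2), (Q n (td t b) (v / 2)).card := by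
  calc (Q (n + 1) t v).card
      ≤ ((pat t (v % 2)).biUnion (fun b =>
          (Q n (td t b) (v / 2)).image (fun q =>
            (2 * q.1 + b.1, 2 * q.2.1 + b.2.1, 2 * q.2.2.1 + b.2.2.1,
              2 * q.2.2.2 + b.2.2.2)))).card :=
        Finset.card_le_card (Q_succ_subset n t v)
    _ ≤ ∑ b ∈ pat t (v % 2), ((Q n (td t b) (v / 2)).image _).card :=
        Finset.card_biUnion_le
    _ ≤ ∑ b ∈ pat t (v % 2), (Q n (td t b) (v / 2)).card :=
        Finset.sum_le_sum (fun b _ => Finset.card_image_le)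

lemma pat_01 : pat 0 1 = ∅ := by decide
lemma pat_10 : pat 1 0 = ∅ := by decide

lemma sum_pat_00 (f : ℤ → ℕ) : ∑ b ∈ pat 0 0, f (td 0 b) = 6 * f 0 + f 1 + f (-1) := by
  simp [pat, td, Finset.sum_filter, Finset.sum_product, Finset.sum_range_succ]
  ring

lemma sum_pat_11 (f : ℤ → ℕ) : ∑ b ∈ pat 1 1, f (td 1 b) = 4 * f 0 + 4 * f 1 := by
  simp [pat, td, Finset.sum_filter, Finset.sum_product, Finset.sum_range_succ]
  ring

lemma Q_zero (v : ℕ) : (Q 0 0 v).card + (Q 0 1 v).card ≤ 1 := by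
  have h1 : Q 0 1 v = ∅ := by
    apply Finset.filter_eq_empty_iff.mpr
    rintro ⟨x, y, z, w⟩ hm
    simp only [Finset.mem_product, Finset.mem_range, pow_zero, Nat.lt_one_iff] at hm
    obtain ⟨rfl, rfl, rfl, rfl⟩ := hm
    simp
  have h0 : (Q 0 0 v).card ≤ 1 := by
    calc (Q 0 0 v).card ≤ (Finset.range (2 ^ 0) ×ˢ Finset.range (2 ^ 0) ×ˢ
          Finset.range (2 ^ 0) ×ˢ Finset.range (2 ^ 0)).card := Finset.card_filter_le _ _
      _ = 1 := by simp
  rw [h1]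
  simpa using h0

lemma key_bound : ∀ n v : ℕ, (Q n 0 v).card + (Q n 1 v).card ≤ 6 ^ n := by
  intro n
  induction n with
  | zero => intro v; simpa using Q_zero v
  | succ n ih =>
    intro v
    rcases Nat.mod_two_eq_zero_or_one v with hv | hv
    · have h1 : (Q (n + 1) 1 v).card = 0 := by
        have := Q_succ_card n 1 v
        rw [hv, pat_10] at this
        simpa using this
      have h0 : (Q (n + 1) 0 v).card ≤
          6 * (Q n 0 (v / 2)).card + (Q n 1 (v / 2)).card + (Q n (-1) (v / 2)).card := by
        have := Q_succ_card n 0 v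
        rw [hv] at this
        rwa [sum_pat_00 (fun e => (Q n e (v / 2)).card)] at this
      rw [Q_neg_one] at h0
      have := ih (v / 2)
      calc (Q (n + 1) 0 v).card + (Q (n + 1) 1 v).card
          ≤ 6 * ((Q n 0 (v / 2)).card + (Q n 1 (v / 2)).card) := by omega
        _ ≤ 6 * 6 ^ n := by omega
        _ = 6 ^ (n + 1) := by ring
    · have h0 : (Q (n + 1) 0 v).card = 0 := by
        have := Q_succ_card n 0 v
        rw [hv, pat_01] at this
        simpa using this
      have h1 : (Q (n + 1) 1 v).card ≤
          4 * (Q n 0 (v / 2)).card + 4 * (Q n 1 (v / 2)).card := by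
        have := Q_succ_card n 1 v
        rw [hv] at this
        rwa [sum_pat_11 (fun e => (Q n e (v / 2)).card)] at this
      have := ih (v / 2)
      calc (Q (n + 1) 0 v).card + (Q (n + 1) 1 v).card
          ≤ 4 * ((Q n 0 (v / 2)).card + (Q n 1 (v / 2)).card) := by omega
        _ ≤ 6 * 6 ^ n := by omega
        _ = 6 ^ (n + 1) := by ring

end Stmt6Aux

theorem stmt_6 (σ : ℕ → ℕ) (hσ : Function.Bijective σ)
    (hlin : ∀ m n : ℕ, σ (m ^^^ n) = σ m ^^^ σ n) (v n : ℕ) :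
    (Av n σ v).card ≤ 6 ^ n := by
  classical
  have hcond : ∀ x y z : ℕ, (σ x ^^^ σ y ^^^ σ z ^^^ σ v = σ (x + y - z)) ↔
      (x ^^^ y ^^^ z ^^^ v = x + y - z) := by
    intro x y z
    rw [← hlin, ← hlin, ← hlin]
    exact ⟨fun h => hσ.injective h, fun h => by rw [h]⟩
  have hcard : (Av n σ v).card = (Stmt6Aux.Q n 0 v).card := by
    apply Finset.card_bij (fun p _ => (p.1, p.2.1, p.2.2, p.1 + p.2.1 - p.2.2))
    · rintro ⟨x, y, z⟩ hp
      simp only [Av, Finset.mem_filter, Finset.mem_product, Finset.mem_range] at hp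
      obtain ⟨⟨hx, hy, hz⟩, hle, hlt, hx2⟩ := hp
      rw [hcond] at hx2
      simp only [Stmt6Aux.Q, Finset.mem_filter, Finset.mem_product, Finset.mem_range]
      refine ⟨⟨hx, hy, hz, hlt⟩, by omega, ?_⟩
      rw [← hx2]
      exact Nat.xor_xor_cancel_left _ _
    · rintro ⟨x, y, z⟩ _ ⟨x', y', z'⟩ _ h
      simp_all
    · rintro ⟨x, y, z, w⟩ hp
      simp only [Stmt6Aux.Q, Finset.mem_filter, Finset.mem_product, Finset.mem_range] at hp
      obtain ⟨⟨hx, hy, hz, hw⟩, heq, hx2⟩ := hp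
      have hzle : z ≤ x + y := by omega
      have hweq : w = x + y - z := by omega
      refine ⟨(x, y, z), ?_, by simp [hweq]⟩
      simp only [Av, Finset.mem_filter, Finset.mem_product, Finset.mem_range]
      refine ⟨⟨hx, hy, hz⟩, hzle, by omega, ?_⟩
      rw [hcond]
      have : (x ^^^ y ^^^ z) ^^^ ((x ^^^ y ^^^ z) ^^^ w) = (x ^^^ y ^^^ z) ^^^ v := by
        rw [hx2]
      rw [Nat.xor_xor_cancel_left] at this
      rw [← hweq, this]
  rw [hcard]
  have := Stmt6Aux.key_bound n v
  omega
end

section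
/- Let π and σ be permutations of ℕ, let f(u) = π(u) ⊕ σ(u), and let f_n* = max_{u ∈ [0,2^n)} f(u). For a permutation τ of ℕ and v ∈ ℕ let A_n^τ(v) = { (x,y,z) ∈ [0,2^n)³ : x+y-z ∈ [0,2^n), τ(x) ⊕ τ(y) ⊕ τ(z) ⊕ τ(v) = τ(x+y-z) }, and let A_n^σ = { (x,y,z) ∈ [0,2^n)³ : x+y-z ∈ [0,2^n), σ(x) ⊕ σ(y) ⊕ σ(z) = σ(x+y-z) }. Then A_n^σ ⊆ ⋃_{v : π(v) ≤ 4 f_n*} A_n^π(v). -/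
lemma xor_lt_pow {a b k : ℕ} (ha : a < 2 ^ k) (hb : b < 2 ^ k) : a ^^^ b < 2 ^ k :=
  Nat.bitwise_lt_two_pow ha hb

lemma xor_le_two_mul {a b M : ℕ} (ha : a ≤ M) (hb : b ≤ M) : a ^^^ b ≤ 2 * M := by
  rcases Nat.eq_zero_or_pos M with rfl | hM
  · simp_all
  · have hk : 2 ^ (Nat.size M - 1) ≤ M :=
      Nat.lt_size.1 (Nat.sub_lt (Nat.size_pos.2 hM) one_pos)
    have hlt := xor_lt_pow (lt_of_le_of_lt ha (Nat.lt_size_self M))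
      (lt_of_le_of_lt hb (Nat.lt_size_self M))
    have h2 : (2:ℕ) ^ Nat.size M = 2 * 2 ^ (Nat.size M - 1) := by
      conv_lhs => rw [show Nat.size M = Nat.size M - 1 + 1 from
        (Nat.succ_pred_eq_of_pos (Nat.size_pos.2 hM)).symm]
      rw [pow_succ']
    exact le_of_lt (calc a ^^^ b < 2 ^ Nat.size M := hlt
      _ = 2 * 2 ^ (Nat.size M - 1) := h2
      _ ≤ 2 * M := Nat.mul_le_mul_left _ hk)

theorem stmt_7 (π σ : ℕ → ℕ) (hπ : Function.Bijective π) (hσ : Function.Bijective σ)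
    (n : ℕ) (f : ℕ → ℕ) (hf : ∀ u, f u = π u ^^^ σ u)
    (fstar : ℕ) (hfstar : fstar = (Finset.range (2 ^ n)).sup f) :
    (↑(A n σ) : Set (ℕ × ℕ × ℕ)) ⊆ ⋃ v ∈ {v : ℕ | π v ≤ 4 * fstar}, ↑(Av n π v) := by
  rintro ⟨x, y, z⟩ hp
  simp only [A, Finset.coe_filter, Finset.mem_product, Finset.mem_range, Set.mem_setOf_eq,
    Finset.mem_coe, Finset.mem_filter] at hp
  obtain ⟨⟨hx, hy, hz⟩, hle, hw, hσeq⟩ := hp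
  set w := x + y - z with hwdef
  -- f bounds
  have hfb : ∀ u, u < 2 ^ n → f u ≤ fstar := fun u hu => hfstar ▸
    Finset.le_sup (Finset.mem_range.2 hu)
  have key : π x ^^^ π y ^^^ π z ^^^ π w = f x ^^^ f y ^^^ f z ^^^ f w := by
    simp only [hf]
    have : σ x ^^^ σ y ^^^ σ z ^^^ σ w = 0 := by rw [hσeq]; simp [Nat.xor_self]
    -- rearrange
    have h2 : (π x ^^^ σ x) ^^^ (π y ^^^ σ y) ^^^ (π z ^^^ σ z) ^^^ (π w ^^^ σ w)
        = (π x ^^^ π y ^^^ π z ^^^ π w) ^^^ (σ x ^^^ σ y ^^^ σ z ^^^ σ w) := by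
      ac_rfl
    rw [h2, this, Nat.xor_zero]
  have hbound : π x ^^^ π y ^^^ π z ^^^ π w ≤ 4 * fstar := by
    rw [key]
    have h1 := xor_le_two_mul (hfb x hx) (hfb y hy)
    have h2 := xor_le_two_mul (hfb z hz) (hfb w hw)
    calc f x ^^^ f y ^^^ f z ^^^ f w = (f x ^^^ f y) ^^^ (f z ^^^ f w) := by
          simp [Nat.xor_assoc]
      _ ≤ 2 * (2 * fstar) := xor_le_two_mul h1 h2
      _ = 4 * fstar := by ring
  obtain ⟨v, hv⟩ := hπ.surjective (π x ^^^ π y ^^^ π z ^^^ π w)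
  refine Set.mem_iUnion₂.2 ⟨v, by simp only [Set.mem_setOf_eq, hv]; exact hbound, ?_⟩
  simp only [Av, Finset.coe_filter, Set.mem_setOf_eq, Finset.mem_product, Finset.mem_range]
  refine ⟨⟨hx, hy, hz⟩, hle, hw, ?_⟩
  rw [hv]
  have : π x ^^^ π y ^^^ π z ^^^ (π x ^^^ π y ^^^ π z ^^^ π w)
      = (π x ^^^ π x) ^^^ ((π y ^^^ π y) ^^^ ((π z ^^^ π z) ^^^ π w)) := by ac_rfl
  rw [this]
  simp [Nat.xor_self]
  rfl
end

section
/- Let π and σ be permutations of ℕ with f(u) = π(u) ⊕ σ(u) and f_n* = max_{u ∈ [0,2^n)} f(u). Then #A_n^σ ≤ (4 f_n* + 1) · max_v #A_n^π(v); in particular, if π is dyadically linear, then #A_n^σ ≤ (4 f_n* + 1) · 6^n. -/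
/- ### Auxiliary lemmas -/

private lemma xlc (a b c : ℕ) : a ^^^ (b ^^^ c) = b ^^^ (a ^^^ c) := by
  rw [← Nat.xor_assoc, Nat.xor_comm a b, Nat.xor_assoc]

private lemma xor_magic (a b c w a' b' c' w' : ℕ)
    (h : a ^^^ a' ^^^ (b ^^^ b') ^^^ (c ^^^ c') = w ^^^ w') :
    a ^^^ b ^^^ c ^^^ (a' ^^^ b' ^^^ c' ^^^ w') = w := by
  have hw : w = a ^^^ a' ^^^ (b ^^^ b') ^^^ (c ^^^ c') ^^^ w' := by
    rw [h, Nat.xor_assoc, Nat.xor_self, Nat.xor_zero]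
  rw [hw]
  simp [Nat.xor_assoc, Nat.xor_comm, xlc, Nat.xor_self, Nat.xor_xor_cancel_left]

private lemma xor_mod_two (a b : ℕ) : (a ^^^ b) % 2 = (a % 2 + b % 2) % 2 := by
  rw [← Nat.and_one_is_mod (a ^^^ b), Nat.and_xor_distrib_right,
    Nat.and_one_is_mod, Nat.and_one_is_mod]
  rcases Nat.mod_two_eq_zero_or_one a with h | h <;>
    rcases Nat.mod_two_eq_zero_or_one b with h2 | h2 <;> simp [h, h2]

private lemma xor_div_two (a b : ℕ) : (a ^^^ b) / 2 = a / 2 ^^^ b / 2 := by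
  apply Nat.eq_of_testBit_eq
  intro i
  simp [Nat.testBit_div_two]

/-- Quadruples `(x,y,z,w) ∈ [0,2^n)⁴` with `x+y+c = z+w+d` and `x⊕y⊕z⊕w = v`. -/
def Q (n c d v : ℕ) : Finset (ℕ × ℕ × ℕ × ℕ) :=
  (Finset.range (2 ^ n) ×ˢ Finset.range (2 ^ n) ×ˢ
      Finset.range (2 ^ n) ×ˢ Finset.range (2 ^ n)).filter
    (fun p => p.1 + p.2.1 + c = p.2.2.1 + p.2.2.2 + d ∧
      p.1 ^^^ p.2.1 ^^^ p.2.2.1 ^^^ p.2.2.2 = v)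

lemma Q_parity {n c d v : ℕ} (h : (c + d) % 2 ≠ v % 2) : Q n c d v = ∅ := by
  ext ⟨x, y, z, w⟩
  simp only [Q, Finset.mem_filter, Finset.notMem_empty, iff_false, not_and]
  intro _ hs hx
  have e1 := xor_mod_two (x ^^^ y ^^^ z) w
  have e2 := xor_mod_two (x ^^^ y) z
  have e3 := xor_mod_two x y
  rw [hx] at e1
  omega

lemma Q_card_zero {n c d v : ℕ} (h : (c + d) % 2 ≠ v % 2) : (Q n c d v).card = 0 := by
  rw [Q_parity h]; rfl

lemma Q_step (n c d c' d' v m : ℕ)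
    (hm : ((Finset.range 2 ×ˢ Finset.range 2 ×ˢ Finset.range 2 ×ˢ Finset.range 2).filter
      (fun p => p.1 + p.2.1 + c + 2 * d' = p.2.2.1 + p.2.2.2 + d + 2 * c')).card ≤ m) :
    ((Q (n+1) c d v).filter (fun q =>
        q.1 % 2 + q.2.1 % 2 + c + 2 * d' = q.2.2.1 % 2 + q.2.2.2 % 2 + d + 2 * c')).card
      ≤ m * (Q n c' d' (v / 2)).card := by
  classical
  set s := (Q (n+1) c d v).filter (fun q =>
      q.1 % 2 + q.2.1 % 2 + c + 2 * d' = q.2.2.1 % 2 + q.2.2.2 % 2 + d + 2 * c') with hsdef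
  set g : ℕ × ℕ × ℕ × ℕ → ℕ × ℕ × ℕ × ℕ :=
    fun q => (q.1 / 2, q.2.1 / 2, q.2.2.1 / 2, q.2.2.2 / 2) with hgdef
  have hmult : ∀ b ∈ Finset.image g s, (s.filter (fun a => g a = b)).card ≤
      ((Finset.range 2 ×ˢ Finset.range 2 ×ˢ Finset.range 2 ×ˢ Finset.range 2).filter
        (fun p => p.1 + p.2.1 + c + 2 * d' = p.2.2.1 + p.2.2.2 + d + 2 * c')).card := by
    intro b _
    apply Finset.card_le_card_of_injOn
      (fun q => (q.1 % 2, q.2.1 % 2, q.2.2.1 % 2, q.2.2.2 % 2))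
    · rintro ⟨x, y, z, w⟩ hq
      simp only [Finset.mem_coe, hsdef, Finset.mem_filter] at hq
      obtain ⟨⟨_, hfib⟩, _⟩ := hq
      simp only [Finset.mem_coe, Finset.mem_filter, Finset.mem_product, Finset.mem_range]
      exact ⟨⟨Nat.mod_lt _ (by norm_num), Nat.mod_lt _ (by norm_num),
        Nat.mod_lt _ (by norm_num), Nat.mod_lt _ (by norm_num)⟩, hfib⟩
    · rintro ⟨x1, y1, z1, w1⟩ h1 ⟨x2, y2, z2, w2⟩ h2 hmod
      simp only [Finset.coe_filter, Set.mem_setOf_eq, hgdef] at h1 h2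
      obtain ⟨-, hb1⟩ := h1
      obtain ⟨-, hb2⟩ := h2
      rw [← hb2] at hb1
      simp only [Prod.mk.injEq] at hb1 hmod ⊢
      omega
  have h1 : s.card ≤ _ * (Finset.image g s).card :=
    Finset.card_le_mul_card_image s _ hmult
  have h2 : Finset.image g s ⊆ Q n c' d' (v / 2) := by
    intro b hb
    obtain ⟨⟨x, y, z, w⟩, hq, rfl⟩ := Finset.mem_image.mp hb
    simp only [hsdef, Q, Finset.mem_filter, Finset.mem_product, Finset.mem_range] at hq
    obtain ⟨⟨⟨hx, hy, hz, hw⟩, hsum, hxor⟩, hfib⟩ := hq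
    have hp : (2:ℕ) ^ (n + 1) = 2 ^ n * 2 := pow_succ 2 n
    simp only [Q, hgdef, Finset.mem_filter, Finset.mem_product, Finset.mem_range]
    refine ⟨⟨by omega, by omega, by omega, by omega⟩, by omega, ?_⟩
    rw [← hxor, xor_div_two, xor_div_two, xor_div_two]
  calc s.card ≤ _ * (Finset.image g s).card := h1
    _ ≤ m * (Q n c' d' (v / 2)).card :=
      Nat.mul_le_mul hm (Finset.card_le_card h2)

lemma Q_card_le (n : ℕ) : ∀ c d v : ℕ, c ≤ 1 → d ≤ 1 → (Q n c d v).card ≤ 6 ^ n := by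
  induction n with
  | zero =>
    intro c d v _ _
    have hsub : Q 0 c d v ⊆ {(0, 0, 0, 0)} := by
      rintro ⟨x, y, z, w⟩ hq
      simp only [Q, Finset.mem_filter, Finset.mem_product, Finset.mem_range, pow_zero] at hq
      obtain ⟨⟨h1, h2, h3, h4⟩, -⟩ := hq
      simp only [Finset.mem_singleton, Prod.mk.injEq]
      omega
    simpa using Finset.card_le_card hsub
  | succ n ih =>
    intro c d v hc hd
    have cover : Q (n+1) c d v ⊆
        (Q (n+1) c d v).filter (fun q =>
          q.1 % 2 + q.2.1 % 2 + c + 2 * 0 = q.2.2.1 % 2 + q.2.2.2 % 2 + d + 2 * 0) ∪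
        (Q (n+1) c d v).filter (fun q =>
          q.1 % 2 + q.2.1 % 2 + c + 2 * 0 = q.2.2.1 % 2 + q.2.2.2 % 2 + d + 2 * 1) ∪
        (Q (n+1) c d v).filter (fun q =>
          q.1 % 2 + q.2.1 % 2 + c + 2 * 1 = q.2.2.1 % 2 + q.2.2.2 % 2 + d + 2 * 0) := by
      rintro ⟨x, y, z, w⟩ hq
      have hq' := hq
      simp only [Q, Finset.mem_filter, Finset.mem_product, Finset.mem_range] at hq'
      obtain ⟨-, hsum, -⟩ := hq'
      simp only [Finset.mem_union, Finset.mem_filter]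
      have : (x % 2 + y % 2 + c + 2 * 0 = z % 2 + w % 2 + d + 2 * 0) ∨
          (x % 2 + y % 2 + c + 2 * 0 = z % 2 + w % 2 + d + 2 * 1) ∨
          (x % 2 + y % 2 + c + 2 * 1 = z % 2 + w % 2 + d + 2 * 0) := by omega
      rcases this with h | h | h
      · exact Or.inl (Or.inl ⟨hq, h⟩)
      · exact Or.inl (Or.inr ⟨hq, h⟩)
      · exact Or.inr ⟨hq, h⟩
    have tot : (Q (n+1) c d v).card ≤
        ((Q (n+1) c d v).filter (fun q =>
          q.1 % 2 + q.2.1 % 2 + c + 2 * 0 = q.2.2.1 % 2 + q.2.2.2 % 2 + d + 2 * 0)).card +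
        ((Q (n+1) c d v).filter (fun q =>
          q.1 % 2 + q.2.1 % 2 + c + 2 * 0 = q.2.2.1 % 2 + q.2.2.2 % 2 + d + 2 * 1)).card +
        ((Q (n+1) c d v).filter (fun q =>
          q.1 % 2 + q.2.1 % 2 + c + 2 * 1 = q.2.2.1 % 2 + q.2.2.2 % 2 + d + 2 * 0)).card :=
      le_trans (Finset.card_le_card cover)
        (le_trans (Finset.card_union_le _ _)
          (Nat.add_le_add_right (Finset.card_union_le _ _) _))
    have k00 := ih 0 0 (v / 2) (by norm_num) (by norm_num)
    have k10 := ih 1 0 (v / 2) (by norm_num) (by norm_num)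
    have k01 := ih 0 1 (v / 2) (by norm_num) (by norm_num)
    have hp6 : (6:ℕ) ^ (n + 1) = 6 ^ n * 6 := pow_succ 6 n
    rcases Nat.mod_two_eq_zero_or_one (v / 2) with hp | hp
    · -- (v/2) even : only the (0,0) target survives
      have z10 : (Q n 1 0 (v / 2)).card = 0 := Q_card_zero (by omega)
      have z01 : (Q n 0 1 (v / 2)).card = 0 := Q_card_zero (by omega)
      interval_cases c <;> interval_cases d
      · have b0 := Q_step n 0 0 0 0 v 6 (by decide)
        have b1 := Q_step n 0 0 1 0 v 1 (by decide)
        have b2 := Q_step n 0 0 0 1 v 1 (by decide)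
        omega
      · have b0 := Q_step n 0 1 0 0 v 4 (by decide)
        have b1 := Q_step n 0 1 1 0 v 0 (by decide)
        have b2 := Q_step n 0 1 0 1 v 4 (by decide)
        omega
      · have b0 := Q_step n 1 0 0 0 v 4 (by decide)
        have b1 := Q_step n 1 0 1 0 v 4 (by decide)
        have b2 := Q_step n 1 0 0 1 v 0 (by decide)
        omega
      · have b0 := Q_step n 1 1 0 0 v 6 (by decide)
        have b1 := Q_step n 1 1 1 0 v 1 (by decide)
        have b2 := Q_step n 1 1 0 1 v 1 (by decide)
        omega
    · -- (v/2) odd : the (0,0) target is empty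
      have z00 : (Q n 0 0 (v / 2)).card = 0 := Q_card_zero (by omega)
      interval_cases c <;> interval_cases d
      · have b0 := Q_step n 0 0 0 0 v 6 (by decide)
        have b1 := Q_step n 0 0 1 0 v 1 (by decide)
        have b2 := Q_step n 0 0 0 1 v 1 (by decide)
        omega
      · have b0 := Q_step n 0 1 0 0 v 4 (by decide)
        have b1 := Q_step n 0 1 1 0 v 0 (by decide)
        have b2 := Q_step n 0 1 0 1 v 4 (by decide)
        omega
      · have b0 := Q_step n 1 0 0 0 v 4 (by decide)
        have b1 := Q_step n 1 0 1 0 v 4 (by decide)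
        have b2 := Q_step n 1 0 0 1 v 0 (by decide)
        omega
      · have b0 := Q_step n 1 1 0 0 v 6 (by decide)
        have b1 := Q_step n 1 1 1 0 v 1 (by decide)
        have b2 := Q_step n 1 1 0 1 v 1 (by decide)
        omega

lemma Av_card_le {n v : ℕ} {π : ℕ → ℕ} (hinj : Function.Injective π)
    (hlin : ∀ a b : ℕ, π (a ^^^ b) = π a ^^^ π b) : (Av n π v).card ≤ 6 ^ n := by
  refine le_trans (Finset.card_le_card_of_injOn
    (fun q => (q.1, q.2.1, q.2.2, q.1 + q.2.1 - q.2.2)) ?_ ?_)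
    (Q_card_le n 0 0 v (by norm_num) (by norm_num))
  · rintro ⟨x, y, z⟩ hq
    simp only [Finset.mem_coe, Av, Finset.mem_filter, Finset.mem_product, Finset.mem_range] at hq
    obtain ⟨⟨hx, hy, hz⟩, hzle, hw, hxor⟩ := hq
    rw [← hlin, ← hlin, ← hlin] at hxor
    have hkey : x ^^^ y ^^^ z ^^^ v = x + y - z := hinj hxor
    simp only [Finset.mem_coe, Q, Finset.mem_filter, Finset.mem_product, Finset.mem_range]
    refine ⟨⟨hx, hy, hz, hw⟩, by omega, ?_⟩
    rw [← hkey]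
    simp [Nat.xor_assoc, Nat.xor_comm, xlc, Nat.xor_self, Nat.xor_xor_cancel_left]
  · rintro ⟨x1, y1, z1⟩ - ⟨x2, y2, z2⟩ - h
    simp only [Prod.mk.injEq] at h ⊢
    exact ⟨h.1, h.2.1, h.2.2.1⟩

private lemma two_pow_size_le (m : ℕ) : 2 ^ m.size ≤ 2 * m + 1 := by
  rcases Nat.eq_zero_or_pos m with rfl | hm
  · simp
  · have h1 : 1 ≤ m.size := Nat.lt_size.mpr (by rw [pow_zero]; exact hm)
    have h2 : 2 ^ (m.size - 1) ≤ m := Nat.lt_size.mp (by omega)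
    have h3 : 2 ^ m.size = 2 ^ (m.size - 1) * 2 := by
      rw [← pow_succ]
      congr 1
      omega
    omega

theorem stmt_8 (π σ : ℕ → ℕ) (hπ : Function.Bijective π) (hσ : Function.Bijective σ)
    (n : ℕ) (f : ℕ → ℕ) (hf : ∀ u, f u = π u ^^^ σ u)
    (fstar : ℕ) (hfstar : fstar = (Finset.range (2 ^ n)).sup f) :
    (A n σ).card ≤ (4 * fstar + 1) * (⨆ v, (Av n π v).card) ∧
    ((∀ a b : ℕ, π (a ^^^ b) = π a ^^^ π b) →
      (A n σ).card ≤ (4 * fstar + 1) * 6 ^ n) := by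
  classical
  have hbdd : BddAbove (Set.range fun v => (Av n π v).card) := by
    refine ⟨2 ^ n * (2 ^ n * 2 ^ n), ?_⟩
    rintro x ⟨v, rfl⟩
    have h := Finset.card_filter_le
      (Finset.range (2 ^ n) ×ˢ Finset.range (2 ^ n) ×ˢ Finset.range (2 ^ n))
      (fun p => p.2.2 ≤ p.1 + p.2.1 ∧ p.1 + p.2.1 - p.2.2 < 2 ^ n ∧
        π p.1 ^^^ π p.2.1 ^^^ π p.2.2 ^^^ π v = π (p.1 + p.2.1 - p.2.2))
    simpa [Av, Finset.card_product] using h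
  -- the fibering function
  set g : ℕ × ℕ × ℕ → ℕ :=
    fun q => f q.1 ^^^ f q.2.1 ^^^ f q.2.2 ^^^ f (q.1 + q.2.1 - q.2.2) with hgdef
  have hfu : ∀ u, u < 2 ^ n → f u < 2 ^ fstar.size := by
    intro u hu
    have : f u ≤ fstar := hfstar ▸ Finset.le_sup (Finset.mem_range.mpr hu)
    exact lt_of_le_of_lt this (Nat.lt_size_self fstar)
  have himg : ((A n σ).image g).card ≤ 4 * fstar + 1 := by
    have hsub : (A n σ).image g ⊆ Finset.range (2 ^ fstar.size) := by
      intro t ht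
      obtain ⟨⟨x, y, z⟩, hq, rfl⟩ := Finset.mem_image.mp ht
      simp only [A, Finset.mem_filter, Finset.mem_product, Finset.mem_range] at hq
      obtain ⟨⟨hx, hy, hz⟩, hzle, hw, -⟩ := hq
      simp only [Finset.mem_range, hgdef]
      exact Nat.xor_lt_two_pow (Nat.xor_lt_two_pow (Nat.xor_lt_two_pow
        (hfu x hx) (hfu y hy)) (hfu z hz)) (hfu _ hw)
    have := Finset.card_le_card hsub
    simp only [Finset.card_range] at this
    have h2 := two_pow_size_le fstar
    omega
  have key1 : (A n σ).card ≤ (4 * fstar + 1) * (⨆ v, (Av n π v).card) := by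
    have hcard := Finset.card_eq_sum_card_fiberwise
      (f := g) (s := A n σ) (t := (A n σ).image g)
      (fun x hx => Finset.mem_image_of_mem g hx)
    have hfib : ∀ t ∈ (A n σ).image g,
        ((A n σ).filter (fun q => g q = t)).card ≤ ⨆ v, (Av n π v).card := by
      intro t _
      obtain ⟨v, hv⟩ := hπ.2 t
      have hsub : (A n σ).filter (fun q => g q = t) ⊆ Av n π v := by
        rintro ⟨x, y, z⟩ hq
        simp only [A, Finset.mem_filter, Finset.mem_product, Finset.mem_range, hgdef] at hq
        obtain ⟨⟨⟨hx, hy, hz⟩, hzle, hw, hxor⟩, hgq⟩ := hq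
        simp only [Av, Finset.mem_filter, Finset.mem_product, Finset.mem_range]
        refine ⟨⟨hx, hy, hz⟩, hzle, hw, ?_⟩
        rw [hv, ← hgq]
        have hsx : ∀ u, σ u = π u ^^^ f u := by
          intro u
          rw [hf u, Nat.xor_xor_cancel_left]
        rw [hsx, hsx, hsx, hsx] at hxor
        exact xor_magic _ _ _ _ _ _ _ _ hxor
      exact le_trans (Finset.card_le_card hsub) (le_ciSup hbdd v)
    calc (A n σ).card
        = ∑ t ∈ (A n σ).image g, ((A n σ).filter (fun q => g q = t)).card := hcard
      _ ≤ ((A n σ).image g).card * (⨆ v, (Av n π v).card) := by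
          simpa using Finset.sum_le_card_nsmul _ _ _ hfib
      _ ≤ (4 * fstar + 1) * (⨆ v, (Av n π v).card) :=
          Nat.mul_le_mul_right _ himg
  refine ⟨key1, fun hlin => ?_⟩
  have hsup : (⨆ v, (Av n π v).card) ≤ 6 ^ n :=
    ciSup_le (fun v => Av_card_le hπ.1 hlin)
  exact key1.trans (Nat.mul_le_mul_left _ hsup)
end

section
/- Let π and σ be permutations of ℕ, let f̂(u) = |π(u) - σ(u)| and f̂_n* = max_{u ∈ [0,2^n)} f̂(u). Then Â_n^σ ⊆ ⋃_{v ∈ ℤ, |v| ≤ 4 f̂_n*} Â_n^π(v), and hence #Â_n^σ ≤ (8 f̂_n* + 1) · max_{|v| ≤ 4 f̂_n*} #Â_n^π(v), where Â_n^τ(v) = { (x,y,z) ∈ [0,2^n)³ : τ(x) + τ(y) - τ(z) + v = τ(x ⊕ y ⊕ z) } (equation in ℤ) and Â_n^σ = Â_n^σ(0). -/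
/-! Every triple `(x, y, z)` of the cube lies in exactly one `Ahat n τ v`, namely for the defect
`v = τ(x ⊕ y ⊕ z) - (τ x + τ y - τ z)`. Replacing `σ` by `π` moves this defect by a signed sum of
four values of `π - σ`, hence by at most `4 f̂_n*`; the cardinality bound follows by counting over
the `8 f̂_n* + 1` possible values of the defect. -/

/-- `Ahat n τ v`: triples `(x,y,z) ∈ [0,2^n)³` with
`τ(x) + τ(y) - τ(z) + v = τ(x ⊕ y ⊕ z)` in `ℤ`. -/
def Ahat (n : ℕ) (τ : ℕ → ℕ) (v : ℤ) : Finset (ℕ × ℕ × ℕ) :=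
  (Finset.range (2 ^ n) ×ˢ Finset.range (2 ^ n) ×ˢ Finset.range (2 ^ n)).filter
    (fun p => (τ p.1 : ℤ) + τ p.2.1 - τ p.2.2 + v = τ (p.1 ^^^ p.2.1 ^^^ p.2.2))

def xorDefect (τ : ℕ → ℕ) (p : ℕ × ℕ × ℕ) : ℤ :=
  τ (p.1 ^^^ p.2.1 ^^^ p.2.2) - ((τ p.1 : ℤ) + τ p.2.1 - τ p.2.2)

theorem mem_Ahat_iff {n : ℕ} {τ : ℕ → ℕ} {v : ℤ} {p : ℕ × ℕ × ℕ} :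
    p ∈ Ahat n τ v ↔ (p.1 < 2 ^ n ∧ p.2.1 < 2 ^ n ∧ p.2.2 < 2 ^ n) ∧ xorDefect τ p = v := by
  simp only [Ahat, xorDefect, Finset.mem_filter, Finset.mem_product, Finset.mem_range]
  constructor <;> rintro ⟨hp, h⟩ <;> exact ⟨hp, by linarith⟩

theorem abs_xorDefect_sub_le {n : ℕ} {π σ : ℕ → ℕ} {F : ℤ}
    (hF : ∀ u < 2 ^ n, |(π u : ℤ) - σ u| ≤ F) {x y z : ℕ}
    (hx : x < 2 ^ n) (hy : y < 2 ^ n) (hz : z < 2 ^ n) :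
    |xorDefect π (x, y, z) - xorDefect σ (x, y, z)| ≤ 4 * F := by
  have hw : x ^^^ y ^^^ z < 2 ^ n := Nat.xor_lt_two_pow (Nat.xor_lt_two_pow hx hy) hz
  have hsplit : xorDefect π (x, y, z) - xorDefect σ (x, y, z) =
      ((π (x ^^^ y ^^^ z) : ℤ) - σ (x ^^^ y ^^^ z)) - ((π x : ℤ) - σ x)
        - ((π y : ℤ) - σ y) + ((π z : ℤ) - σ z) := by
    simp only [xorDefect]; ring
  obtain ⟨hw₁, hw₂⟩ := abs_le.mp (hF _ hw)
  obtain ⟨hx₁, hx₂⟩ := abs_le.mp (hF x hx)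
  obtain ⟨hy₁, hy₂⟩ := abs_le.mp (hF y hy)
  obtain ⟨hz₁, hz₂⟩ := abs_le.mp (hF z hz)
  rw [hsplit, abs_le]
  constructor <;> linarith

theorem exists_mem_Ahat_of_mem_Ahat {n : ℕ} {π σ : ℕ → ℕ} {F : ℤ}
    (hF : ∀ u < 2 ^ n, |(π u : ℤ) - σ u| ≤ F) {p : ℕ × ℕ × ℕ} (hp : p ∈ Ahat n σ 0) :
    ∃ v, |v| ≤ 4 * F ∧ p ∈ Ahat n π v := by
  obtain ⟨x, y, z⟩ := p
  obtain ⟨⟨hx, hy, hz⟩, hσ⟩ := mem_Ahat_iff.mp hp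
  refine ⟨xorDefect π (x, y, z), ?_, mem_Ahat_iff.mpr ⟨⟨hx, hy, hz⟩, rfl⟩⟩
  simpa [hσ] using abs_xorDefect_sub_le hF hx hy hz

theorem Finset.card_le_of_forall_exists_abs_le {α : Type*} [DecidableEq α] {s : Finset α}
    {t : ℤ → Finset α} {r : ℤ} {M : ℕ} (hr : 0 ≤ r) (hs : ∀ a ∈ s, ∃ v, |v| ≤ r ∧ a ∈ t v)
    (ht : ∀ v, |v| ≤ r → (t v).card ≤ M) :
    (s.card : ℤ) ≤ (2 * r + 1) * M := by
  have hsub : s ⊆ (Finset.Icc (-r) r).biUnion t := fun a ha => by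
    obtain ⟨v, hv, hav⟩ := hs a ha
    exact Finset.mem_biUnion.mpr ⟨v, Finset.mem_Icc.mpr (abs_le.mp hv), hav⟩
  have hcard : s.card ≤ (Finset.Icc (-r) r).card * M :=
    (Finset.card_le_card hsub).trans <| Finset.card_biUnion_le_card_mul _ _ _
      fun v hv => ht v (abs_le.mpr (Finset.mem_Icc.mp hv))
  have hIcc : ((Finset.Icc (-r) r).card : ℤ) = 2 * r + 1 := by
    rw [Int.card_Icc, Int.toNat_of_nonneg (by linarith)]; ring
  calc (s.card : ℤ) ≤ ((Finset.Icc (-r) r).card * M : ℕ) := by exact_mod_cast hcard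
    _ = (2 * r + 1) * M := by push_cast [hIcc]; rfl

theorem Int.abs_le_sup_natAbs {ι : Type*} {s : Finset ι} (f : ι → ℤ) {i : ι} (hi : i ∈ s) :
    |f i| ≤ (s.sup fun i => (f i).natAbs : ℕ) := by
  rw [Int.abs_eq_natAbs]
  exact_mod_cast Finset.le_sup (f := fun i => (f i).natAbs) hi

theorem stmt_9_general (π σ : ℕ → ℕ) (n : ℕ)
    (fstar : ℤ) (hfstar : fstar = ((Finset.range (2 ^ n)).sup
      (fun u => ((π u : ℤ) - σ u).natAbs) : ℕ)) :
    ((↑(Ahat n σ 0) : Set (ℕ × ℕ × ℕ)) ⊆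
        ⋃ v ∈ {v : ℤ | |v| ≤ 4 * fstar}, (↑(Ahat n π v) : Set (ℕ × ℕ × ℕ))) ∧
    ∀ M : ℕ, (∀ v : ℤ, |v| ≤ 4 * fstar → (Ahat n π v).card ≤ M) →
      ((Ahat n σ 0).card : ℤ) ≤ (8 * fstar + 1) * M := by
  have hF : ∀ u < 2 ^ n, |(π u : ℤ) - σ u| ≤ fstar :=
    fun u hu => hfstar ▸
      Int.abs_le_sup_natAbs (fun u => (π u : ℤ) - σ u) (Finset.mem_range.mpr hu)
  have hcover := fun p (hp : p ∈ Ahat n σ 0) => exists_mem_Ahat_of_mem_Ahat hF hp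
  refine ⟨fun p hp => ?_, fun M hM => ?_⟩
  · obtain ⟨v, hv, hpv⟩ := hcover p hp
    exact Set.mem_iUnion₂.mpr ⟨v, hv, hpv⟩
  · have hF0 : 0 ≤ 4 * fstar := by rw [hfstar]; positivity
    simpa [← mul_assoc] using Finset.card_le_of_forall_exists_abs_le hF0 hcover hM

theorem stmt_9 (π σ : ℕ → ℕ) (hπ : Function.Bijective π) (hσ : Function.Bijective σ)
    (n : ℕ) (fhat : ℕ → ℤ) (hf : ∀ u, fhat u = |(π u : ℤ) - σ u|)
    (fstar : ℤ) (hfstar : fstar = ((Finset.range (2 ^ n)).sup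
      (fun u => ((π u : ℤ) - σ u).natAbs) : ℕ)) :
    ((↑(Ahat n σ 0) : Set (ℕ × ℕ × ℕ)) ⊆
        ⋃ v ∈ {v : ℤ | |v| ≤ 4 * fstar}, (↑(Ahat n π v) : Set (ℕ × ℕ × ℕ))) ∧
    ∀ M : ℕ, (∀ v : ℤ, |v| ≤ 4 * fstar → (Ahat n π v).card ≤ M) →
      ((Ahat n σ 0).card : ℤ) ≤ (8 * fstar + 1) * M :=
  stmt_9_general π σ n fstar hfstar
end

section
/- If σ is a dyadically linear permutation of ℕ and v ∈ ℤ, then for every natural number n, the cardinality of Â_n^σ(v) = { (x,y,z) ∈ [0,2^n)³ : σ(x) + σ(y) - σ(z) + v = σ(x ⊕ y ⊕ z) } is at most 6^n. -/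
def dd (i j k : ℕ) : ℤ :=
  if i = 1 ∧ j = 1 ∧ k = 0 then 1 else if i = 0 ∧ j = 0 ∧ k = 1 then -1 else 0

/-- count of solutions over a triple of cosets `p⊕W, q⊕W, r⊕W`. -/
def cnt (W : Finset ℕ) (p q r : ℕ) (v : ℤ) : ℕ :=
  (((W.image (p ^^^ ·)) ×ˢ (W.image (q ^^^ ·)) ×ˢ (W.image (r ^^^ ·))).filter
    (fun t => (t.1 : ℤ) + t.2.1 - t.2.2 + v = ((t.1 ^^^ t.2.1 ^^^ t.2.2 : ℕ) : ℤ))).card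

lemma mem_coset {W : Finset ℕ} {p a : ℕ} : a ∈ W.image (p ^^^ ·) ↔ p ^^^ a ∈ W := by
  simp only [Finset.mem_image]
  constructor
  · rintro ⟨w, hw, rfl⟩
    simpa [← Nat.xor_assoc] using hw
  · intro h
    exact ⟨p ^^^ a, h, by simp [← Nat.xor_assoc]⟩

lemma eq_transfer {a b c : ℕ} {u : ℤ}
    (h : (a:ℤ) + b - c + 2*u = ((a ^^^ b ^^^ c : ℕ) : ℤ)) :
    ((a/2 : ℕ):ℤ) + ((b/2 : ℕ):ℤ) - ((c/2:ℕ):ℤ) + (u + dd (a%2) (b%2) (c%2))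
      = ((a/2 ^^^ b/2 ^^^ c/2 : ℕ) : ℤ) := by
  have hdiv : (a ^^^ b ^^^ c) / 2 = a/2 ^^^ b/2 ^^^ c/2 := by
    rw [Nat.xor_div_two, Nat.xor_div_two]
  have hmod : (a ^^^ b ^^^ c) % 2 = (a % 2 + b % 2 + c % 2) % 2 := by
    have h1 : (a^^^b^^^c) % 2 = ((a^^^b) + c) % 2 := Nat.xor_mod_two_eq
    have h2 : (a^^^b) % 2 = (a+b) % 2 := Nat.xor_mod_two_eq
    omega
  unfold dd
  split_ifs <;> omega

lemma cnt_zero {W : Finset ℕ} {p q r : ℕ} {v : ℤ} (hv : v % 2 ≠ 0) :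
    cnt W p q r v = 0 := by
  unfold cnt
  rw [Finset.card_eq_zero, Finset.filter_eq_empty_iff]
  rintro ⟨a, b, c⟩ -
  intro heq
  have h1 : (a^^^b^^^c) % 2 = ((a^^^b) + c) % 2 := Nat.xor_mod_two_eq
  have h2 : (a^^^b) % 2 = (a+b) % 2 := Nat.xor_mod_two_eq
  simp only at heq
  omega

lemma mem_transfer {W : Finset ℕ} (hcl : ∀ x ∈ W, ∀ y ∈ W, x ^^^ y ∈ W) {p a a₀ : ℕ}
    (ha : p ^^^ a ∈ W) (ha₀ : p ^^^ a₀ ∈ W) (hpar : a % 2 = a₀ % 2) :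
    (a₀/2) ^^^ (a/2) ∈ (W.filter (fun w => w % 2 = 0)).image (·/2) := by
  have hw : a₀ ^^^ a ∈ W := by
    have := hcl _ ha₀ _ ha
    have hx : (p ^^^ a₀) ^^^ (p ^^^ a) = a₀ ^^^ a := by
      rw [Nat.xor_comm p a₀, Nat.xor_assoc, ← Nat.xor_assoc p p a, Nat.xor_self, Nat.zero_xor]
    rwa [hx] at this
  have heven : (a₀ ^^^ a) % 2 = 0 := by
    have := Nat.xor_mod_two_eq (m := a₀) (n := a); omega
  refine Finset.mem_image.mpr ⟨a₀ ^^^ a, Finset.mem_filter.mpr ⟨hw, heven⟩, ?_⟩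
  exact Nat.xor_div_two

lemma key : ∀ (N : ℕ) (W : Finset ℕ) (m : ℕ), 0 ∈ W →
    (∀ x ∈ W, ∀ y ∈ W, x ^^^ y ∈ W) → (∀ w ∈ W, w < 2^N) → W.card = 2^m →
    ∀ p q r : ℕ, ∀ v : ℤ, cnt W p q r v ≤ 6^m := by
  intro N
  induction N with
  | zero =>
    intro W m h0 hcl hbd hcard p q r v
    have hW : W = {0} := by
      apply Finset.eq_singleton_iff_unique_mem.mpr
      exact ⟨h0, fun w hw => by have := hbd w hw; omega⟩
    have : cnt W p q r v ≤ 1 := by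
      unfold cnt
      refine (Finset.card_filter_le _ _).trans ?_
      subst hW
      simp
    exact this.trans (Nat.one_le_pow _ _ (by norm_num))
  | succ N ih =>
    intro W m h0 hcl hbd hcard p q r v
    by_cases hv2 : v % 2 = 0
    swap
    · rw [cnt_zero hv2]; exact Nat.zero_le _
    obtain ⟨u, rfl⟩ : ∃ u, v = 2*u := ⟨v/2, by omega⟩
    set W₀ := W.filter (fun w => w % 2 = 0) with hW₀
    set W' := W₀.image (·/2) with hW'
    have hmemW' : ∀ x, x ∈ W' ↔ ∃ w ∈ W, w % 2 = 0 ∧ w / 2 = x := by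
      intro x
      simp [hW', hW₀, Finset.mem_image, Finset.mem_filter, and_assoc]
    have h0' : 0 ∈ W' := (hmemW' 0).mpr ⟨0, h0, by omega, by omega⟩
    have hcl' : ∀ x ∈ W', ∀ y ∈ W', x ^^^ y ∈ W' := by
      intro x hx y hy
      obtain ⟨w1, hw1, he1, rfl⟩ := (hmemW' x).mp hx
      obtain ⟨w2, hw2, he2, rfl⟩ := (hmemW' y).mp hy
      refine (hmemW' _).mpr ⟨w1 ^^^ w2, hcl _ hw1 _ hw2, ?_, Nat.xor_div_two⟩
      have := Nat.xor_mod_two_eq (m := w1) (n := w2); omega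
    have hbd' : ∀ w ∈ W', w < 2^N := by
      intro x hx
      obtain ⟨w, hw, -, rfl⟩ := (hmemW' x).mp hx
      have := hbd w hw
      have : w < 2 * 2^N := by rwa [← pow_succ'] 
      omega
    have hinjdiv : Set.InjOn (·/2) ↑W₀ := by
      intro x hx y hy hxy
      simp only [hW₀, Finset.coe_filter, Set.mem_setOf_eq] at hx hy
      simp only at hxy
      omega
    have hcardW' : W'.card = W₀.card := Finset.card_image_of_injOn hinjdiv
    -- the big set
    set S := (((W.image (p ^^^ ·)) ×ˢ (W.image (q ^^^ ·)) ×ˢ (W.image (r ^^^ ·))).filter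
      (fun t => (t.1 : ℤ) + t.2.1 - t.2.2 + 2*u = ((t.1 ^^^ t.2.1 ^^^ t.2.2 : ℕ) : ℤ))) with hS
    have hcntS : cnt W p q r (2*u) = S.card := rfl
    -- fiber bound
    have hfib : ∀ m' : ℕ, W'.card = 2^m' → ∀ i j k : ℕ,
        (S.filter (fun t => (t.1 % 2, t.2.1 % 2, t.2.2 % 2) = (i, j, k))).card ≤
          (if (u + dd i j k) % 2 = 0 then 6^m' else 0) := by
      intro m' hc' i j k
      rcases Finset.eq_empty_or_nonempty
        (S.filter (fun t => (t.1 % 2, t.2.1 % 2, t.2.2 % 2) = (i, j, k))) with hF | ⟨⟨a₀,b₀,c₀⟩, hF0⟩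
      · rw [hF, Finset.card_empty]; exact Nat.zero_le _
      have hmemF : ∀ a b c : ℕ, ((a,b,c) ∈ S.filter (fun t => (t.1 % 2, t.2.1 % 2, t.2.2 % 2) = (i, j, k))) ↔
          (p ^^^ a ∈ W ∧ q ^^^ b ∈ W ∧ r ^^^ c ∈ W ∧
            ((a : ℤ) + b - c + 2*u = ((a ^^^ b ^^^ c : ℕ) : ℤ)) ∧
            a % 2 = i ∧ b % 2 = j ∧ c % 2 = k) := by
        intro a b c
        simp only [hS, Finset.mem_filter, Finset.mem_product, mem_coset, Prod.mk.injEq]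
        tauto
      rw [hmemF] at hF0
      obtain ⟨hpa₀, hqb₀, hrc₀, heq₀, hia₀, hjb₀, hkc₀⟩ := hF0
      have key1 : (S.filter (fun t => (t.1 % 2, t.2.1 % 2, t.2.2 % 2) = (i, j, k))).card ≤
          cnt W' (a₀/2) (b₀/2) (c₀/2) (u + dd i j k) := by
        unfold cnt
        apply Finset.card_le_card_of_injOn (fun t => (t.1/2, t.2.1/2, t.2.2/2))
        · rintro ⟨a, b, c⟩ ht
          rw [Finset.mem_coe, hmemF] at ht
          obtain ⟨hpa, hqb, hrc, heq, hia, hjb, hkc⟩ := ht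
          simp only [Finset.mem_coe, Finset.mem_filter, Finset.mem_product]
          refine ⟨⟨?_, ?_, ?_⟩, ?_⟩
          · exact mem_coset.mpr (mem_transfer hcl hpa hpa₀ (by omega))
          · exact mem_coset.mpr (mem_transfer hcl hqb hqb₀ (by omega))
          · exact mem_coset.mpr (mem_transfer hcl hrc hrc₀ (by omega))
          · have := eq_transfer heq
            rw [hia, hjb, hkc] at this
            exact this
        · rintro ⟨a, b, c⟩ ha ⟨a', b', c'⟩ hb hab
          simp only [Finset.mem_coe, hmemF] at ha hb
          simp only [Prod.mk.injEq] at hab ⊢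
          omega
      by_cases hpar : (u + dd i j k) % 2 = 0
      · rw [if_pos hpar]
        exact key1.trans (ih W' m' h0' hcl' hbd' (hc'.symm ▸ rfl) _ _ _ _)
      · rw [if_neg hpar]
        rwa [cnt_zero hpar] at key1
    by_cases hodd : ∃ t ∈ W, t % 2 = 1
    · -- odd case
      obtain ⟨t, htW, ht⟩ := hodd
      have hm1 : 1 ≤ m := by
        have h2 : 2 ≤ W.card := Finset.one_lt_card.mpr ⟨0, h0, t, htW, by omega⟩
        rw [hcard] at h2
        by_contra h
        interval_cases m <;> omega
      obtain ⟨m', rfl⟩ : ∃ m', m = m' + 1 := ⟨m - 1, by omega⟩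
      -- card W₀ = 2^m'
      have hsplit : W₀.card + (W.filter (fun w => ¬ w % 2 = 0)).card = W.card :=
        Finset.card_filter_add_card_filter_not _
      have hbij : W₀.card = (W.filter (fun w => ¬ w % 2 = 0)).card := by
        apply Finset.card_bij' (fun w _ => w ^^^ t) (fun w _ => w ^^^ t)
        · intro w hw
          simp only [hW₀, Finset.mem_filter] at hw ⊢
          refine ⟨hcl _ hw.1 _ htW, ?_⟩
          have := Nat.xor_mod_two_eq (m := w) (n := t); omega
        · intro w hw
          simp only [hW₀, Finset.mem_filter] at hw ⊢
          refine ⟨hcl _ hw.1 _ htW, ?_⟩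
          have := Nat.xor_mod_two_eq (m := w) (n := t); omega
        · intro w _; rw [Nat.xor_assoc, Nat.xor_self, Nat.xor_zero]
        · intro w _; rw [Nat.xor_assoc, Nat.xor_self, Nat.xor_zero]
      have hcard₀ : W'.card = 2^m' := by
        rw [hcardW']
        have : 2 * W₀.card = 2 * 2^m' := by
          rw [← pow_succ'] 
          omega
        omega
      -- fiberwise decomposition
      have hdecomp : S.card = ∑ π ∈ (({0,1} : Finset ℕ) ×ˢ ({0,1} : Finset ℕ) ×ˢ ({0,1} : Finset ℕ)),
          (S.filter (fun t => (t.1 % 2, t.2.1 % 2, t.2.2 % 2) = π)).card := by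
        apply Finset.card_eq_sum_card_fiberwise
        intro t _
        simp only [Finset.mem_coe, Finset.mem_product, Finset.mem_insert, Finset.mem_singleton]
        omega
      rw [hcntS, hdecomp]
      have hbound : ∑ π ∈ (({0,1} : Finset ℕ) ×ˢ ({0,1} : Finset ℕ) ×ˢ ({0,1} : Finset ℕ)),
          (S.filter (fun t => (t.1 % 2, t.2.1 % 2, t.2.2 % 2) = π)).card ≤
          ∑ π ∈ (({0,1} : Finset ℕ) ×ˢ ({0,1} : Finset ℕ) ×ˢ ({0,1} : Finset ℕ)),
          (if (u + dd π.1 π.2.1 π.2.2) % 2 = 0 then 6^m' else 0) := by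
        apply Finset.sum_le_sum
        rintro ⟨i, j, k⟩ _
        exact hfib m' hcard₀ i j k
      refine hbound.trans ?_
      simp only [Finset.sum_product, Finset.sum_insert (by decide : (0:ℕ) ∉ ({1} : Finset ℕ)), Finset.sum_singleton]
      unfold dd
      norm_num
      by_cases hu : (2:ℤ) ∣ u
      · have h1 : ¬ ((2:ℤ) ∣ u + 1) := by omega
        have h2 : ¬ ((2:ℤ) ∣ u + -1) := by omega
        simp only [if_pos hu, if_neg h1, if_neg h2]
        rw [pow_succ]
        linarith [Nat.zero_le (6^m')]
      · have h1 : ((2:ℤ) ∣ u + 1) := by omega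
        have h2 : ((2:ℤ) ∣ u + -1) := by omega
        simp only [if_neg hu, if_pos h1, if_pos h2]
        rw [pow_succ]
        linarith [Nat.zero_le (6^m')]
    · -- even case
      push_neg at hodd
      have hWeven : ∀ w ∈ W, w % 2 = 0 := by
        intro w hw
        have := hodd w hw; omega
      have hW₀W : W₀ = W := Finset.filter_eq_self.mpr hWeven
      have hcard' : W'.card = 2^m := by rw [hcardW', hW₀W, hcard]
      have hSfix : S = S.filter (fun t => (t.1 % 2, t.2.1 % 2, t.2.2 % 2) = (p % 2, q % 2, r % 2)) := by
        symm
        apply Finset.filter_eq_self.mpr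
        rintro ⟨a, b, c⟩ ht
        simp only [hS, Finset.mem_filter, Finset.mem_product, mem_coset] at ht
        obtain ⟨⟨hpa, hqb, hrc⟩, -⟩ := ht
        have e1 := Nat.xor_mod_two_eq (m := p) (n := a)
        have e2 := Nat.xor_mod_two_eq (m := q) (n := b)
        have e3 := Nat.xor_mod_two_eq (m := r) (n := c)
        have f1 := hWeven _ hpa
        have f2 := hWeven _ hqb
        have f3 := hWeven _ hrc
        simp only [Prod.mk.injEq]
        omega
      rw [hcntS, hSfix]
      refine (hfib m hcard' (p % 2) (q % 2) (r % 2)).trans ?_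
      split_ifs
      · exact le_refl _
      · exact Nat.zero_le _


theorem stmt_10 (σ : ℕ → ℕ) (hσ : Function.Bijective σ)
    (hlin : ∀ m n : ℕ, σ (m ^^^ n) = σ m ^^^ σ n) (v : ℤ) (n : ℕ) :
    (Ahat n σ v).card ≤ 6 ^ n := by
  classical
  have h0σ : σ 0 = 0 := by
    have := hlin 0 0
    simpa using this
  set W := (Finset.range (2^n)).image σ with hW
  have h0 : 0 ∈ W := Finset.mem_image.mpr ⟨0, Finset.mem_range.mpr (Nat.pow_pos (by norm_num)), h0σ⟩
  have hcl : ∀ x ∈ W, ∀ y ∈ W, x ^^^ y ∈ W := by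
    rintro x hx y hy
    obtain ⟨a, ha, rfl⟩ := Finset.mem_image.mp hx
    obtain ⟨b, hb, rfl⟩ := Finset.mem_image.mp hy
    rw [← hlin]
    exact Finset.mem_image.mpr ⟨a ^^^ b, Finset.mem_range.mpr
      (Nat.xor_lt_two_pow (Finset.mem_range.mp ha) (Finset.mem_range.mp hb)), rfl⟩
  have hcard : W.card = 2^n := by
    rw [Finset.card_image_of_injective _ hσ.injective, Finset.card_range]
  set N := W.sup id with hN
  have hbd : ∀ w ∈ W, w < 2^N :=
    fun w hw => lt_of_le_of_lt (Finset.le_sup (f := id) hw) (Nat.lt_two_pow_self (n := N))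
  have hle : (Ahat n σ v).card ≤ cnt W 0 0 0 v := by
    unfold Ahat cnt
    apply Finset.card_le_card_of_injOn (fun t => (σ t.1, σ t.2.1, σ t.2.2))
    · rintro ⟨x, y, z⟩ ht
      simp only [Finset.mem_coe, Finset.mem_filter, Finset.mem_product, Finset.mem_range] at ht
      obtain ⟨⟨hx, hy, hz⟩, heq⟩ := ht
      simp only [Finset.mem_coe, Finset.mem_filter, Finset.mem_product]
      refine ⟨⟨?_, ?_, ?_⟩, ?_⟩
      · rw [mem_coset, Nat.zero_xor]
        exact Finset.mem_image.mpr ⟨x, Finset.mem_range.mpr hx, rfl⟩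
      · rw [mem_coset, Nat.zero_xor]
        exact Finset.mem_image.mpr ⟨y, Finset.mem_range.mpr hy, rfl⟩
      · rw [mem_coset, Nat.zero_xor]
        exact Finset.mem_image.mpr ⟨z, Finset.mem_range.mpr hz, rfl⟩
      · show (↑(σ x) : ℤ) + ↑(σ y) - ↑(σ z) + v = ↑(σ x ^^^ σ y ^^^ σ z)
        rw [hlin, hlin] at heq
        exact heq
    · rintro ⟨x, y, z⟩ - ⟨x', y', z'⟩ - hxy
      simp only [Prod.mk.injEq] at hxy ⊢
      exact ⟨hσ.injective hxy.1, hσ.injective hxy.2.1, hσ.injective hxy.2.2⟩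
  exact hle.trans (key N W n h0 hcl hbd hcard 0 0 0 v)
end

section
/- Let σ be the Walsh-Kaczmarz permutation defined by σ(0)=0 and σ(2^k + Σ_{i=0}^{k-1} x_i 2^i) = 2^k + Σ_{i=0}^{k-1} x_{k-1-i} 2^i for all k ≥ 0 and x_0,...,x_{k-1} ∈ {0,1} (bit reversal within each dyadic block). Then for every n, the cardinality of Ã_n^σ = { (k,l,m) ∈ [2^n, 2^{n+1})³ : k+l-m ∈ [2^n, 2^{n+1}) and σ(k) ⊕ σ(l) ⊕ σ(m) = σ(k+l-m) } is at most 6^n. -/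
/-- `Atil n τ`: triples `(k,l,m) ∈ [2^n, 2^(n+1))³` with `k+l-m ∈ [2^n, 2^(n+1))` and
`τ(k) ⊕ τ(l) ⊕ τ(m) = τ(k+l-m)`. -/
def Atil (n : ℕ) (τ : ℕ → ℕ) : Finset (ℕ × ℕ × ℕ) :=
  (Finset.Ico (2 ^ n) (2 ^ (n + 1)) ×ˢ Finset.Ico (2 ^ n) (2 ^ (n + 1)) ×ˢ
      Finset.Ico (2 ^ n) (2 ^ (n + 1))).filter
    (fun p => p.2.2 ≤ p.1 + p.2.1 ∧ 2 ^ n ≤ p.1 + p.2.1 - p.2.2 ∧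
      p.1 + p.2.1 - p.2.2 < 2 ^ (n + 1) ∧
      τ p.1 ^^^ τ p.2.1 ^^^ τ p.2.2 = τ (p.1 + p.2.1 - p.2.2))

/-- Bit reversal of m viewed as a k-bit number. -/
def bitrev (k m : ℕ) : ℕ :=
  ∑ i ∈ Finset.range k, if Nat.testBit m (k - 1 - i) then 2 ^ i else 0

/- ### auxiliary lemmas -/

lemma xor_div_two_s11 (x y : ℕ) : (x ^^^ y) / 2 = x / 2 ^^^ y / 2 := by
  apply Nat.eq_of_testBit_eq; intro i
  simp [← Nat.testBit_succ, Nat.testBit_xor]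

lemma xor_parity (x y : ℕ) : (x ^^^ y) % 2 = (x + y) % 2 := by
  have h := Nat.testBit_xor x y 0
  simp only [Nat.testBit_zero] at h
  rcases Nat.mod_two_eq_zero_or_one x with hx | hx <;>
    rcases Nat.mod_two_eq_zero_or_one y with hy | hy <;>
      simp [hx, hy] at h ⊢ <;> omega

lemma xor3_eq (p a b c : ℕ) : (p ^^^ a) ^^^ (p ^^^ b) ^^^ (p ^^^ c) = p ^^^ (a ^^^ b ^^^ c) := by
  apply Nat.eq_of_testBit_eq; intro i
  simp only [Nat.testBit_xor]
  cases p.testBit i <;> cases a.testBit i <;> cases b.testBit i <;> cases c.testBit i <;> rfl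

lemma two_pow_add_eq_xor {n x : ℕ} (h : x < 2 ^ n) : 2 ^ n + x = 2 ^ n ^^^ x := by
  apply Nat.eq_of_testBit_eq; intro i
  rcases lt_trichotomy i n with hi | hi | hi
  · rw [Nat.testBit_two_pow_add_gt hi, Nat.testBit_xor, Nat.testBit_two_pow]
    simp [Nat.ne_of_gt hi]
  · subst hi
    rw [Nat.testBit_two_pow_add_eq, Nat.testBit_xor, Nat.testBit_two_pow_self,
      Nat.testBit_lt_two_pow h]
    rfl
  · have h1 : 2 ^ n + x < 2 ^ i := by
      calc 2 ^ n + x < 2 ^ n + 2 ^ n := by omega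
      _ = 2 ^ (n + 1) := by ring
      _ ≤ 2 ^ i := Nat.pow_le_pow_right (by norm_num) hi
    rw [Nat.testBit_lt_two_pow h1, Nat.testBit_xor, Nat.testBit_two_pow,
      Nat.testBit_lt_two_pow (show x < 2 ^ i by omega)]
    simp [Nat.ne_of_lt hi]

lemma bitrev_succ (k m : ℕ) :
    bitrev (k + 1) m = 2 * bitrev k m + (if m.testBit k then 1 else 0) := by
  rw [bitrev, Finset.sum_range_succ', bitrev, Finset.mul_sum]
  simp only [Nat.add_sub_cancel, Nat.sub_zero, pow_zero]
  congr 1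
  apply Finset.sum_congr rfl
  intro i _
  rw [show k - (i + 1) = k - 1 - i by omega, pow_succ]
  split <;> ring

lemma bitrev_lt (k m : ℕ) : bitrev k m < 2 ^ k := by
  induction k with
  | zero => simp [bitrev]
  | succ k ih =>
    rw [bitrev_succ, pow_succ]
    split <;> omega

lemma testBit_bitrev (k m : ℕ) {i : ℕ} (h : i < k) :
    (bitrev k m).testBit i = m.testBit (k - 1 - i) := by
  induction k generalizing i with
  | zero => omega
  | succ k ih =>
    rw [bitrev_succ]
    cases i with
    | zero =>
      simp only [Nat.testBit_zero, Nat.add_sub_cancel, Nat.sub_zero]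
      by_cases hb : m.testBit k <;> simp [hb] <;> omega
    | succ i =>
      rw [Nat.testBit_succ]
      have hd : (2 * bitrev k m + if m.testBit k then 1 else 0) / 2 = bitrev k m := by
        split <;> omega
      rw [hd, ih (by omega)]
      congr 1
      omega

lemma bitrev_xor (k x y : ℕ) (hx : x < 2 ^ k) (hy : y < 2 ^ k) :
    bitrev k (x ^^^ y) = bitrev k x ^^^ bitrev k y := by
  apply Nat.eq_of_testBit_eq; intro i
  rcases lt_or_ge i k with h | h
  · rw [Nat.testBit_xor, testBit_bitrev _ _ h, testBit_bitrev _ _ h, testBit_bitrev _ _ h,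
      Nat.testBit_xor]
  · have hb : ∀ z : ℕ, (bitrev k z).testBit i = false := fun z =>
      Nat.testBit_lt_two_pow (lt_of_lt_of_le (bitrev_lt k z) (Nat.pow_le_pow_right (by norm_num) h))
    rw [Nat.testBit_xor, hb, hb, hb]
    rfl

lemma bitrev_bitrev (k m : ℕ) (h : m < 2 ^ k) : bitrev k (bitrev k m) = m := by
  apply Nat.eq_of_testBit_eq; intro i
  rcases lt_or_ge i k with hi | hi
  · rw [testBit_bitrev _ _ hi, testBit_bitrev _ _ (show k - 1 - i < k by omega)]
    congr 1; omega
  · have h2 : (2:ℕ) ^ k ≤ 2 ^ i := Nat.pow_le_pow_right (by norm_num) hi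
    rw [Nat.testBit_lt_two_pow (lt_of_lt_of_le (bitrev_lt k _) h2),
      Nat.testBit_lt_two_pow (lt_of_lt_of_le h h2)]

/-- quadruples with equal sums and xor relation -/
def Squad (n : ℕ) : Finset (ℕ × ℕ × ℕ × ℕ) :=
  (Finset.range (2 ^ n) ×ˢ Finset.range (2 ^ n) ×ˢ Finset.range (2 ^ n) ×ˢ
      Finset.range (2 ^ n)).filter
    (fun p => p.1 + p.2.1 = p.2.2.1 + p.2.2.2 ∧ p.1 ^^^ p.2.1 ^^^ p.2.2.1 = p.2.2.2)

def Tlow : Finset (ℕ × ℕ × ℕ × ℕ) :=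
  {(0,0,0,0), (1,1,1,1), (1,0,1,0), (1,0,0,1), (0,1,1,0), (0,1,0,1)}

lemma card_Tlow : Tlow.card = 6 := by decide

lemma mem_Tlow {x y z w : ℕ} (hx : x < 2) (hy : y < 2) (hz : z < 2) (hw : w < 2)
    (hs : x + y = z + w) : (x, y, z, w) ∈ Tlow := by
  interval_cases x <;> interval_cases y <;> interval_cases z <;> interval_cases w <;>
    first | decide | omega

lemma mem_Squad {n a b c d : ℕ} :
    (a, b, c, d) ∈ Squad n ↔
      a < 2 ^ n ∧ b < 2 ^ n ∧ c < 2 ^ n ∧ d < 2 ^ n ∧ a + b = c + d ∧ a ^^^ b ^^^ c = d := by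
  simp [Squad, and_assoc]

lemma card_Squad (n : ℕ) : (Squad n).card ≤ 6 ^ n := by
  induction n with
  | zero =>
    have h := Finset.card_filter_le
      (Finset.range (2 ^ 0) ×ˢ Finset.range (2 ^ 0) ×ˢ Finset.range (2 ^ 0) ×ˢ
        Finset.range (2 ^ 0))
      (fun p => p.1 + p.2.1 = p.2.2.1 + p.2.2.2 ∧ p.1 ^^^ p.2.1 ^^^ p.2.2.1 = p.2.2.2)
    simpa [Squad] using h
  | succ n ih =>
    have key : (Squad (n + 1)).card ≤ (Squad n ×ˢ Tlow).card := by
      apply Finset.card_le_card_of_injOn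
        (fun p => ((p.1 / 2, p.2.1 / 2, p.2.2.1 / 2, p.2.2.2 / 2),
          (p.1 % 2, p.2.1 % 2, p.2.2.1 % 2, p.2.2.2 % 2)))
      · rintro ⟨a, b, c, d⟩ hp
        dsimp only
        rw [Finset.mem_coe, mem_Squad] at hp
        obtain ⟨ha, hb, hc, hd, hsum, hxor⟩ := hp
        have hpow : (2:ℕ) ^ (n + 1) = 2 * 2 ^ n := by ring
        have h2 : a / 2 ^^^ b / 2 ^^^ c / 2 = d / 2 := by
          rw [← xor_div_two_s11, ← xor_div_two_s11, hxor]
        -- parity facts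
        have e1 := xor_parity (a ^^^ b) c
        have e2 := xor_parity a b
        have e1' := xor_parity (a / 2 ^^^ b / 2) (c / 2)
        have e2' := xor_parity (a / 2) (b / 2)
        have p1 : d % 2 = (a + b + c) % 2 := by rw [← hxor]; omega
        have p2 : d / 2 % 2 = (a / 2 + b / 2 + c / 2) % 2 := by rw [← h2]; omega
        rw [Finset.mem_coe, Finset.mem_product]
        constructor
        · rw [mem_Squad]
          exact ⟨by omega, by omega, by omega, by omega, by omega, h2⟩
        · exact mem_Tlow (by omega) (by omega) (by omega) (by omega) (by omega)
      · rintro ⟨a, b, c, d⟩ _ ⟨a', b', c', d'⟩ _ h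
        simp only [Prod.mk.injEq] at h ⊢
        omega
    calc (Squad (n + 1)).card ≤ (Squad n ×ˢ Tlow).card := key
      _ = (Squad n).card * 6 := by rw [Finset.card_product, card_Tlow]
      _ ≤ 6 ^ n * 6 := by exact Nat.mul_le_mul_right 6 ih
      _ = 6 ^ (n + 1) := by ring

theorem stmt_11 (σ : ℕ → ℕ) (hσ : Function.Bijective σ) (h0 : σ 0 = 0)
    (hσdef : ∀ k m : ℕ, m < 2 ^ k → σ (2 ^ k + m) = 2 ^ k + bitrev k m) (n : ℕ) :
    (Atil n σ).card ≤ 6 ^ n := by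
  have key : (Atil n σ).card ≤ (Squad n).card := by
    apply Finset.card_le_card_of_injOn
      (fun p => (p.1 - 2 ^ n, p.2.1 - 2 ^ n, p.2.2 - 2 ^ n, p.1 + p.2.1 - p.2.2 - 2 ^ n))
    · rintro ⟨k, l, m⟩ hp
      dsimp only
      simp only [Finset.mem_coe, Atil, Finset.mem_filter, Finset.mem_product, Finset.mem_Ico] at hp
      obtain ⟨⟨⟨hk1, hk2⟩, ⟨hl1, hl2⟩, hm1, hm2⟩, hmle, hd1, hd2, hσc⟩ := hp
      have hpow : (2:ℕ) ^ (n + 1) = 2 * 2 ^ n := by ring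
      set a := k - 2 ^ n with hadef
      set b := l - 2 ^ n with hbdef
      set c := m - 2 ^ n with hcdef
      set d := k + l - m - 2 ^ n with hddef
      have ha : a < 2 ^ n := by omega
      have hb : b < 2 ^ n := by omega
      have hc : c < 2 ^ n := by omega
      have hd : d < 2 ^ n := by omega
      have hsum : a + b = c + d := by omega
      have hσk : σ k = 2 ^ n ^^^ bitrev n a := by
        rw [show k = 2 ^ n + a by omega, hσdef n a ha, two_pow_add_eq_xor (bitrev_lt n a)]
      have hσl : σ l = 2 ^ n ^^^ bitrev n b := by
        rw [show l = 2 ^ n + b by omega, hσdef n b hb, two_pow_add_eq_xor (bitrev_lt n b)]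
      have hσm : σ m = 2 ^ n ^^^ bitrev n c := by
        rw [show m = 2 ^ n + c by omega, hσdef n c hc, two_pow_add_eq_xor (bitrev_lt n c)]
      have hσd : σ (k + l - m) = 2 ^ n ^^^ bitrev n d := by
        rw [show k + l - m = 2 ^ n + d by omega, hσdef n d hd,
          two_pow_add_eq_xor (bitrev_lt n d)]
      rw [hσk, hσl, hσm, hσd, xor3_eq] at hσc
      have hr : bitrev n a ^^^ bitrev n b ^^^ bitrev n c = bitrev n d := by
        have := congrArg (fun t => 2 ^ n ^^^ t) hσc
        simpa [Nat.xor_xor_cancel_left, Nat.xor_assoc] using this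
      have hxor : a ^^^ b ^^^ c = d := by
        have hab : a ^^^ b < 2 ^ n := Nat.xor_lt_two_pow ha hb
        have h1 : bitrev n (a ^^^ b ^^^ c) = bitrev n d := by
          rw [bitrev_xor n _ _ hab hc, bitrev_xor n _ _ ha hb, hr]
        have := congrArg (bitrev n) h1
        rwa [bitrev_bitrev n _ (Nat.xor_lt_two_pow hab hc), bitrev_bitrev n _ hd] at this
      exact mem_Squad.mpr ⟨ha, hb, hc, hd, hsum, hxor⟩
    · rintro ⟨k, l, m⟩ hp ⟨k', l', m'⟩ hq h
      simp only [Atil, Finset.mem_filter, Finset.mem_product, Finset.mem_Ico, Finset.coe_filter,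
        Set.mem_setOf_eq] at hp hq
      simp only [Prod.mk.injEq] at h ⊢
      obtain ⟨⟨⟨hk1, _⟩, ⟨hl1, _⟩, hm1, _⟩, _⟩ := hp
      obtain ⟨⟨⟨hk1', _⟩, ⟨hl1', _⟩, hm1', _⟩, _⟩ := hq
      omega
  exact le_trans key (card_Squad n)
end
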